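/- arXiv:2303.13891 — 2 statements merged into one kernel-verified Lean document; each statement's English description precedes it below -/
import Mathlib

section
/- Let A be a finite set, X = Aℕ, T the left shift, and g a Doeblin function. For x, x̃ ∈ X and b ≥ 1, the Hellinger integral of the prefix distributions ξ_x^b and ξ_{x̃}^b satisfies H(ξ_x^b, ξ_{x̃}^b) ≥ exp(−Σ_{j=0}^{b-1} log cosh(r_{κ(x,x̃)+b−j}/2)), where r_n = var_n(log g) and κ(x,x̃) is the length of initial agreement of x and x̃. -/
open Finset

/-- Prepend the finite word `p : Fin b → A` to the sequence `x : ℕ → A`. -/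
def prepend {A : Type*} {b : ℕ} (p : Fin b → A) (x : ℕ → A) : ℕ → A :=
  fun i => if h : i < b then p ⟨i, h⟩ else x (i - b)

/-- The left shift on Aℕ. -/
def shift {A : Type*} (x : ℕ → A) : ℕ → A := fun i => x (i + 1)

/-- The prefix distribution ξ_x^b(p) = Π_{k<b} g(T^k(p·x)). -/
noncomputable def prefixDist {A : Type*} (g : (ℕ → A) → ℝ) (b : ℕ) (x : ℕ → A)
    (p : Fin b → A) : ℝ :=
  ∏ k ∈ Finset.range b, g (shift^[k] (prepend p x))

/-- The variation of order n of log g. -/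
noncomputable def logVar {A : Type*} (g : (ℕ → A) → ℝ) (n : ℕ) : ℝ :=
  sSup {d : ℝ | ∃ x y : ℕ → A, (∀ i < n, x i = y i) ∧
    d = |Real.log (g x) - Real.log (g y)|}

-- boundedness of |log g|
lemma abs_log_g_bdd {A : Type*} [Fintype A] [TopologicalSpace A] [DiscreteTopology A]
    (g : (ℕ → A) → ℝ) (hg_cont : Continuous g) (hg_pos : ∀ x, 0 < g x)
    (hg_le : ∀ x, g x ≤ 1) (x₀ : ℕ → A) :
    ∃ c : ℝ, ∀ z, |Real.log (g z)| ≤ c := by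
  have : Nonempty A := ⟨x₀ 0⟩
  obtain ⟨z₀, -, hz₀⟩ := isCompact_univ.exists_isMinOn (Set.univ_nonempty)
    hg_cont.continuousOn
  refine ⟨-Real.log (g z₀), fun z => ?_⟩
  have h1 : Real.log (g z) ≤ 0 := Real.log_nonpos (hg_pos z).le (hg_le z)
  have h2 : Real.log (g z₀) ≤ Real.log (g z) :=
    Real.log_le_log (hg_pos z₀) (isMinOn_iff.1 hz₀ z (Set.mem_univ z))
  rw [abs_of_nonpos h1]; linarith

lemma le_logVar {A : Type*} [Fintype A] [TopologicalSpace A] [DiscreteTopology A]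
    (g : (ℕ → A) → ℝ) (hg_cont : Continuous g) (hg_pos : ∀ x, 0 < g x)
    (hg_le : ∀ x, g x ≤ 1) {n : ℕ} {x y : ℕ → A} (h : ∀ i < n, x i = y i) :
    |Real.log (g x) - Real.log (g y)| ≤ logVar g n := by
  obtain ⟨c, hbd⟩ := abs_log_g_bdd g hg_cont hg_pos hg_le x
  apply le_csSup
  · refine ⟨2 * c, ?_⟩
    rintro d ⟨u, v, -, rfl⟩
    calc |Real.log (g u) - Real.log (g v)|
        ≤ |Real.log (g u)| + |Real.log (g v)| := abs_sub _ _
      _ ≤ c + c := add_le_add (hbd u) (hbd v)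
      _ = 2 * c := by ring
  · exact ⟨x, y, h, rfl⟩

lemma sqrt_mul_pair_ge (u v r : ℝ) (hu : 0 < u) (hv : 0 < v)
    (hr : |Real.log u - Real.log v| ≤ r) :
    (u + v) / (2 * Real.cosh (r / 2)) ≤ Real.sqrt (u * v) := by
  have hcosh : (0:ℝ) < Real.cosh (r/2) := Real.cosh_pos _
  rw [div_le_iff₀ (by positivity)]
  have hs : Real.sqrt (u * v) = Real.exp ((Real.log u + Real.log v) / 2) := by
    rw [Real.sqrt_eq_rpow, Real.rpow_def_of_pos (by positivity),
      Real.log_mul hu.ne' hv.ne']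
    ring_nf
  have key : Real.sqrt (u * v) * (2 * Real.cosh ((Real.log u - Real.log v) / 2))
      = u + v := by
    rw [hs, Real.cosh_eq]
    rw [show (2:ℝ) * ((Real.exp ((Real.log u - Real.log v)/2) +
        Real.exp (-((Real.log u - Real.log v)/2))) / 2)
      = Real.exp ((Real.log u - Real.log v)/2) +
        Real.exp (-((Real.log u - Real.log v)/2)) by ring]
    rw [mul_add, ← Real.exp_add, ← Real.exp_add,
      show (Real.log u + Real.log v)/2 + (Real.log u - Real.log v)/2 = Real.log u by ring,
      show (Real.log u + Real.log v)/2 + -((Real.log u - Real.log v)/2) = Real.log v by ring,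
      Real.exp_log hu, Real.exp_log hv]
  calc u + v = Real.sqrt (u*v) * (2 * Real.cosh ((Real.log u - Real.log v)/2)) := key.symm
    _ ≤ Real.sqrt (u*v) * (2 * Real.cosh (r/2)) := by
        apply mul_le_mul_of_nonneg_left _ (Real.sqrt_nonneg _)
        have : Real.cosh ((Real.log u - Real.log v)/2) ≤ Real.cosh (r/2) := by
          rw [Real.cosh_le_cosh, abs_div, abs_div]
          exact (div_le_div_iff_of_pos_right (by norm_num : (0:ℝ) < |2|)).mpr
            (hr.trans (le_abs_self r))
        linarith

lemma hellinger_sum {A : Type*} [Fintype A] (u v : A → ℝ) (r : ℝ)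
    (hu : ∀ a, 0 < u a) (hv : ∀ a, 0 < v a)
    (hus : ∑ a, u a = 1) (hvs : ∑ a, v a = 1)
    (hr : ∀ a, |Real.log (u a) - Real.log (v a)| ≤ r) :
    1 / Real.cosh (r / 2) ≤ ∑ a, Real.sqrt (u a * v a) := by
  have hcosh : (0:ℝ) < Real.cosh (r/2) := Real.cosh_pos _
  have h1 : ∑ a, (u a + v a) / (2 * Real.cosh (r/2)) ≤ ∑ a, Real.sqrt (u a * v a) :=
    Finset.sum_le_sum fun a _ => sqrt_mul_pair_ge _ _ _ (hu a) (hv a) (hr a)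
  calc 1 / Real.cosh (r/2)
      = ∑ a, (u a + v a) / (2 * Real.cosh (r/2)) := by
        rw [← Finset.sum_div, Finset.sum_add_distrib, hus, hvs]
        field_simp
        norm_num
    _ ≤ _ := h1

lemma shift_prepend_cons {A : Type*} {b : ℕ} (a : A) (q : Fin b → A) (x : ℕ → A) :
    shift (prepend (Fin.cons a q) x) = prepend q x := by
  funext i
  simp only [shift, prepend]
  by_cases h : i < b
  · rw [dif_pos h, dif_pos (by omega : i + 1 < b + 1)]
    exact Fin.cons_succ (α := fun _ : Fin (b+1) => A) a q ⟨i, h⟩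
  · rw [dif_neg h, dif_neg (by omega : ¬ i + 1 < b + 1)]
    congr 1
    omega

lemma prepend_cons {A : Type*} {b : ℕ} (a : A) (q : Fin b → A) (x : ℕ → A) :
    prepend (Fin.cons a q) x = prepend (fun _ : Fin 1 => a) (prepend q x) := by
  funext i
  cases i with
  | zero =>
    simp only [prepend]
    rw [dif_pos (by omega : (0:ℕ) < b + 1), dif_pos (by omega : (0:ℕ) < 1)]
    exact Fin.cons_zero (α := fun _ : Fin (b+1) => A) a q
  | succ i =>
    simp only [prepend]
    rw [dif_neg (by omega : ¬ i + 1 < 1)]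
    simp only [Nat.add_sub_cancel]
    by_cases h : i < b
    · rw [dif_pos (by omega : i + 1 < b + 1), dif_pos h]
      exact Fin.cons_succ (α := fun _ : Fin (b+1) => A) a q ⟨i, h⟩
    · rw [dif_neg (by omega : ¬ i + 1 < b + 1), dif_neg h]
      congr 1
      omega

lemma prefixDist_succ {A : Type*} (g : (ℕ → A) → ℝ) (b : ℕ) (x : ℕ → A)
    (a : A) (q : Fin b → A) :
    prefixDist g (b+1) x (Fin.cons a q) =
      g (prepend (fun _ : Fin 1 => a) (prepend q x)) * prefixDist g b x q := by
  unfold prefixDist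
  rw [Finset.prod_range_succ']
  rw [mul_comm]
  congr 1
  · rw [Function.iterate_zero_apply, prepend_cons]
  · apply Finset.prod_congr rfl
    intro k _
    rw [Function.iterate_succ_apply, shift_prepend_cons]

lemma prepend_agree {A : Type*} {b : ℕ} (q : Fin b → A) {x x' : ℕ → A} {m : ℕ}
    (h : ∀ i < m, x i = x' i) : ∀ i < b + m, prepend q x i = prepend q x' i := by
  intro i hi
  simp only [prepend]
  split
  · rfl
  · next hb => exact h _ (by omega)

lemma prefixDist_pos {A : Type*} (g : (ℕ → A) → ℝ) (hg_pos : ∀ x, 0 < g x)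
    (b : ℕ) (x : ℕ → A) (p : Fin b → A) : 0 < prefixDist g b x p :=
  Finset.prod_pos fun k _ => hg_pos _

lemma main_aux {A : Type*} [Fintype A] [TopologicalSpace A] [DiscreteTopology A]
    (g : (ℕ → A) → ℝ) (hg_cont : Continuous g)
    (hg_pos : ∀ x, 0 < g x) (hg_le : ∀ x, g x ≤ 1)
    (hg_sum : ∀ x : ℕ → A, ∑ a : A, g (prepend (fun _ : Fin 1 => a) x) = 1)
    (x x' : ℕ → A) (m : ℕ) (hagree : ∀ i < m, x i = x' i) (b : ℕ) :
    Real.exp (-∑ j ∈ Finset.range b, Real.log (Real.cosh (logVar g (m + b - j) / 2)))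
      ≤ ∑ p : Fin b → A, Real.sqrt (prefixDist g b x p * prefixDist g b x' p) := by
  induction b with
  | zero => simp [prefixDist]
  | succ b ih =>
    set r := logVar g (m + b + 1) with hr_def
    have hcosh : (0:ℝ) < Real.cosh (r / 2) := Real.cosh_pos _
    -- rewrite the RHS target sum
    have hsum_split :
        ∑ j ∈ Finset.range (b+1), Real.log (Real.cosh (logVar g (m + (b+1) - j) / 2))
        = (∑ j ∈ Finset.range b, Real.log (Real.cosh (logVar g (m + b - j) / 2)))
          + Real.log (Real.cosh (r / 2)) := by
      rw [Finset.sum_range_succ']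
      congr 1
      · apply Finset.sum_congr rfl
        intro i hi
        rw [show m + (b + 1) - (i + 1) = m + b - i from by omega]
    -- split the big sum over words of length b+1
    have hsplit :
        ∑ p : Fin (b+1) → A, Real.sqrt (prefixDist g (b+1) x p * prefixDist g (b+1) x' p)
        = ∑ q : Fin b → A,
            Real.sqrt (prefixDist g b x q * prefixDist g b x' q) *
            ∑ a : A, Real.sqrt (g (prepend (fun _ : Fin 1 => a) (prepend q x)) *
              g (prepend (fun _ : Fin 1 => a) (prepend q x'))) := by
      rw [← Fintype.sum_equiv (Fin.consEquiv (fun _ : Fin (b+1) => A))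
        (fun z : A × (Fin b → A) =>
          Real.sqrt (prefixDist g (b+1) x (Fin.cons z.1 z.2) *
            prefixDist g (b+1) x' (Fin.cons z.1 z.2)))
        (fun p => Real.sqrt (prefixDist g (b+1) x p * prefixDist g (b+1) x' p))
        (fun z => rfl)]
      rw [Fintype.sum_prod_type, Finset.sum_comm]
      apply Finset.sum_congr rfl
      intro q _
      rw [Finset.mul_sum]
      apply Finset.sum_congr rfl
      intro a _
      rw [prefixDist_succ, prefixDist_succ, ← Real.sqrt_mul
        (mul_nonneg (prefixDist_pos g hg_pos b x q).le (prefixDist_pos g hg_pos b x' q).le)]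
      congr 1
      ring
    rw [hsplit, hsum_split, neg_add, Real.exp_add,
      Real.exp_neg (Real.log (Real.cosh (r/2))), Real.exp_log hcosh]
    -- inner bound
    have hinner : ∀ q : Fin b → A,
        1 / Real.cosh (r / 2) ≤
        ∑ a : A, Real.sqrt (g (prepend (fun _ : Fin 1 => a) (prepend q x)) *
          g (prepend (fun _ : Fin 1 => a) (prepend q x'))) := by
      intro q
      apply hellinger_sum _ _ r (fun a => hg_pos _) (fun a => hg_pos _)
        (hg_sum _) (hg_sum _)
      intro a
      have hag : ∀ i < 1 + (b + m),
          prepend (fun _ : Fin 1 => a) (prepend q x) i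
          = prepend (fun _ : Fin 1 => a) (prepend q x') i :=
        prepend_agree _ (prepend_agree q hagree)
      have := le_logVar g hg_cont hg_pos hg_le hag
      have heq : 1 + (b + m) = m + b + 1 := by omega
      rwa [heq] at this
    calc Real.exp (-∑ j ∈ Finset.range b, Real.log (Real.cosh (logVar g (m + b - j) / 2)))
          * (Real.cosh (r/2))⁻¹
        ≤ (∑ q : Fin b → A, Real.sqrt (prefixDist g b x q * prefixDist g b x' q))
          * (Real.cosh (r/2))⁻¹ := by
          apply mul_le_mul_of_nonneg_right ih
          positivity
      _ = ∑ q : Fin b → A,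
          Real.sqrt (prefixDist g b x q * prefixDist g b x' q) * (1 / Real.cosh (r/2)) := by
          rw [Finset.sum_mul]
          apply Finset.sum_congr rfl
          intro q _
          rw [one_div]
      _ ≤ ∑ q : Fin b → A,
          Real.sqrt (prefixDist g b x q * prefixDist g b x' q) *
          ∑ a : A, Real.sqrt (g (prepend (fun _ : Fin 1 => a) (prepend q x)) *
            g (prepend (fun _ : Fin 1 => a) (prepend q x'))) := by
          apply Finset.sum_le_sum
          intro q _
          exact mul_le_mul_of_nonneg_left (hinner q) (Real.sqrt_nonneg _)

/-- Lower bound on the Hellinger integral of prefix distributions: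
    H(ξ_x^b, ξ_x̃^b) ≥ exp(−Σ_{j<b} log cosh(r_{κ(x,x̃)+b−j}/2)). -/
theorem hellinger_prefix_bound {A : Type*} [Fintype A]
    [TopologicalSpace A] [DiscreteTopology A]
    (g : (ℕ → A) → ℝ) (hg_cont : Continuous g)
    (hg_pos : ∀ x, 0 < g x) (hg_le : ∀ x, g x ≤ 1)
    (hg_sum : ∀ x : ℕ → A, ∑ a : A, g (prepend (fun _ : Fin 1 => a) x) = 1)
    (x x' : ℕ → A) (m : ℕ)
    (hagree : ∀ i < m, x i = x' i) (hdiff : x m ≠ x' m)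
    (b : ℕ) (hb : 1 ≤ b) :
    ∑ p : Fin b → A, Real.sqrt (prefixDist g b x p * prefixDist g b x' p) ≥
      Real.exp (-∑ j ∈ Finset.range b,
        Real.log (Real.cosh (logVar g (m + b - j) / 2))) :=
  main_aux g hg_cont hg_pos hg_le hg_sum x x' m hagree b
end

section
/- Let (M_k)_{k≥1} be i.i.d. positive random variables with E[M_1] = ∞, and set T_k = M_1 + ⋯ + M_k. Then almost surely limsup_{k→∞} M_k / T_{k−1} = ∞. -/
open MeasureTheory ProbabilityTheory Filter Finset
open scoped ENNReal NNReal

namespace KestenProof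

variable {Ω : Type*} [MeasureSpace Ω] [IsProbabilityMeasure (ℙ : Measure Ω)]

section defs
variable (M : ℕ → Ω → ℝ)

noncomputable def Ge (t : ℝ) : ℝ≥0∞ := ℙ {ω | t < M 0 ω}
noncomputable def G (t : ℝ) : ℝ := (Ge M t).toReal
noncomputable def mm (t : ℝ) : ℝ := ∫ ω, min (M 0 ω) t ∂ℙ
noncomputable def tk (k : ℕ) : ℝ := sSup {u : ℝ | 0 < u ∧ u ≤ 4 * k * mm M u}

end defs

variable {M : ℕ → Ω → ℝ}

lemma set_eq (k : ℕ) (t : ℝ) : {ω | t < M k ω} = M k ⁻¹' Set.Ioi t := rfl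

lemma Ge_eq (hident : ∀ k, IdentDistrib (M k) (M 0) ℙ ℙ) (k : ℕ) (t : ℝ) :
    ℙ {ω | t < M k ω} = Ge M t := by
  rw [Ge, set_eq, set_eq]
  exact (hident k).measure_mem_eq measurableSet_Ioi

lemma Ge_ne_top (t : ℝ) : Ge M t ≠ ⊤ := measure_ne_top _ _

lemma Ge_le_one (t : ℝ) : Ge M t ≤ 1 := prob_le_one

lemma Ge_anti {s t : ℝ} (hst : s ≤ t) : Ge M t ≤ Ge M s :=
  measure_mono (fun ω h => lt_of_le_of_lt hst h)

lemma G_nonneg (t : ℝ) : 0 ≤ G M t := ENNReal.toReal_nonneg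

lemma G_le_one (t : ℝ) : G M t ≤ 1 := by
  rw [G, ← ENNReal.toReal_one]
  exact ENNReal.toReal_mono ENNReal.one_ne_top (Ge_le_one t)

lemma G_anti {s t : ℝ} (hst : s ≤ t) : G M t ≤ G M s :=
  ENNReal.toReal_mono (Ge_ne_top s) (Ge_anti hst)

lemma Ge_eq_ofReal (t : ℝ) : Ge M t = ENNReal.ofReal (G M t) := by
  rw [G, ENNReal.ofReal_toReal (Ge_ne_top t)]

lemma Ge_pos (hmeas : ∀ k, Measurable (M k))
    (hmean : ∫⁻ ω, ENNReal.ofReal (M 0 ω) ∂ℙ = ⊤) (t : ℝ) : 0 < Ge M t := by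
  rcases eq_zero_or_pos (Ge M t) with h | h
  · exfalso
    have hae : ∀ᵐ ω ∂ℙ, M 0 ω ≤ t := by
      rw [ae_iff]
      simpa [not_le, Ge] using h
    have : ∫⁻ ω, ENNReal.ofReal (M 0 ω) ∂ℙ ≤ ∫⁻ _ω : Ω, ENNReal.ofReal t ∂ℙ := by
      refine lintegral_mono_ae ?_
      filter_upwards [hae] with ω h using ENNReal.ofReal_le_ofReal h
    rw [hmean, lintegral_const, measure_univ, mul_one] at this
    exact absurd (top_le_iff.mp this) ENNReal.ofReal_ne_top
  · exact h

lemma G_pos (hmeas : ∀ k, Measurable (M k))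
    (hmean : ∫⁻ ω, ENNReal.ofReal (M 0 ω) ∂ℙ = ⊤) (t : ℝ) : 0 < G M t :=
  ENNReal.toReal_pos (Ge_pos hmeas hmean t).ne' (Ge_ne_top t)

lemma integrable_min (hmeas : ∀ k, Measurable (M k)) (hpos : ∀ k ω, 0 < M k ω)
    (i : ℕ) (s : ℝ) : Integrable (fun ω => min (M i ω) s) ℙ := by
  refine Integrable.mono' (integrable_const |s|)
    (((hmeas i).min measurable_const).aestronglyMeasurable) ?_
  refine Eventually.of_forall (fun ω => ?_)
  rw [Real.norm_eq_abs, abs_le]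
  constructor
  · rcases le_total (M i ω) s with h | h
    · simp only [min_eq_left h]
      nlinarith [hpos i ω, abs_nonneg s]
    · simp only [min_eq_right h]
      exact neg_abs_le s
  · exact le_trans (min_le_right _ _) (le_abs_self s)

lemma mm_eq (hmeas : ∀ k, Measurable (M k)) (hident : ∀ k, IdentDistrib (M k) (M 0) ℙ ℙ)
    (i : ℕ) (s : ℝ) : ∫ ω, min (M i ω) s ∂ℙ = mm M s := by
  exact ((hident i).comp (measurable_id.min measurable_const)).integral_eq

lemma mm_nonneg (hpos : ∀ k ω, 0 < M k ω) {s : ℝ} (hs : 0 ≤ s) : 0 ≤ mm M s :=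
  integral_nonneg (fun ω => le_min (hpos 0 ω).le hs)

lemma mm_mono (hmeas : ∀ k, Measurable (M k)) (hpos : ∀ k ω, 0 < M k ω)
    {s t : ℝ} (hst : s ≤ t) : mm M s ≤ mm M t :=
  integral_mono (integrable_min hmeas hpos 0 s) (integrable_min hmeas hpos 0 t)
    (fun ω => min_le_min le_rfl hst)

lemma mul_G_le_mm (hmeas : ∀ k, Measurable (M k)) (hpos : ∀ k ω, 0 < M k ω)
    {s : ℝ} (hs : 0 ≤ s) : s * G M s ≤ mm M s := by
  have h1 : ∫ ω, Set.indicator {ω | s < M 0 ω} (fun _ => s) ω ∂ℙ = s * G M s := by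
    rw [integral_indicator_const _ (by rw [set_eq]; exact (hmeas 0) measurableSet_Ioi)]
    rw [smul_eq_mul, mul_comm]
    rfl
  rw [← h1]
  refine integral_mono (Integrable.indicator (integrable_const s)
    (by rw [set_eq]; exact (hmeas 0) measurableSet_Ioi)) (integrable_min hmeas hpos 0 s) ?_
  intro ω
  dsimp only
  by_cases h : ω ∈ {ω | s < M 0 ω}
  · rw [Set.indicator_of_mem h]
    exact le_min (le_of_lt h) le_rfl
  · rw [Set.indicator_of_notMem h]
    exact le_min (hpos 0 ω).le hs

lemma mm_incr (hmeas : ∀ k, Measurable (M k)) (hpos : ∀ k ω, 0 < M k ω)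
    {a b : ℝ} (ha : 0 ≤ a) (hab : a ≤ b) :
    mm M b ≤ mm M a + (b - a) * G M a := by
  have h1 : ∫ ω, (min (M 0 ω) a + Set.indicator {ω | a < M 0 ω} (fun _ => b - a) ω) ∂ℙ
      = mm M a + (b - a) * G M a := by
    rw [integral_add (integrable_min hmeas hpos 0 a)
      (Integrable.indicator (integrable_const _)
        (by rw [set_eq]; exact (hmeas 0) measurableSet_Ioi))]
    congr 1
    rw [integral_indicator_const _ (by rw [set_eq]; exact (hmeas 0) measurableSet_Ioi)]
    rw [smul_eq_mul, mul_comm]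
    rfl
  rw [← h1]
  refine integral_mono (integrable_min hmeas hpos 0 b) ?_ ?_
  · exact (integrable_min hmeas hpos 0 a).add
      (Integrable.indicator (integrable_const _)
        (by rw [set_eq]; exact (hmeas 0) measurableSet_Ioi))
  · intro ω
    dsimp only
    by_cases h : ω ∈ {ω | a < M 0 ω}
    · rw [Set.indicator_of_mem h]
      simp only [Set.mem_setOf_eq] at h
      rw [min_eq_right h.le]
      rcases le_total (M 0 ω) b with h2 | h2
      · rw [min_eq_left h2]; linarith [h.le]
      · rw [min_eq_right h2]; linarith
    · rw [Set.indicator_of_notMem h]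
      simp only [Set.mem_setOf_eq, not_lt] at h
      rw [min_eq_left h, min_eq_left (le_trans h hab)]
      linarith

lemma mm_unbounded (hmeas : ∀ k, Measurable (M k)) (hpos : ∀ k ω, 0 < M k ω)
    (hmean : ∫⁻ ω, ENNReal.ofReal (M 0 ω) ∂ℙ = ⊤) (C : ℝ) :
    ∃ n : ℕ, C ≤ mm M n := by
  have hptw : ∀ ω, ⨆ n : ℕ, ENNReal.ofReal (min (M 0 ω) n) = ENNReal.ofReal (M 0 ω) := by
    intro ω
    refine le_antisymm (iSup_le fun n => ENNReal.ofReal_le_ofReal (min_le_left _ _)) ?_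
    refine le_iSup_of_le ⌈M 0 ω⌉₊ (ENNReal.ofReal_le_ofReal ?_)
    exact le_min le_rfl (Nat.le_ceil _)
  have hsup : ⨆ n : ℕ, ∫⁻ ω, ENNReal.ofReal (min (M 0 ω) n) ∂ℙ = ⊤ := by
    have hmono : Monotone (fun (n : ℕ) (ω : Ω) => ENNReal.ofReal (min (M 0 ω) n)) := by
      intro n m hnm ω
      exact ENNReal.ofReal_le_ofReal (min_le_min le_rfl (by exact_mod_cast hnm))
    rw [lintegral_iSup (fun n => ((hmeas 0).min measurable_const).ennreal_ofReal) hmono |>.symm]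
    calc ∫⁻ ω, ⨆ n : ℕ, ENNReal.ofReal (min (M 0 ω) n) ∂ℙ
        = ∫⁻ ω, ENNReal.ofReal (M 0 ω) ∂ℙ := lintegral_congr (fun ω => hptw ω)
      _ = ⊤ := hmean
  have : ENNReal.ofReal C < ⨆ n : ℕ, ∫⁻ ω, ENNReal.ofReal (min (M 0 ω) n) ∂ℙ := by
    rw [hsup]; exact ENNReal.ofReal_lt_top
  rw [lt_iSup_iff] at this
  obtain ⟨n, hn⟩ := this
  refine ⟨n, ?_⟩
  have hfin : ∫⁻ ω, ENNReal.ofReal (min (M 0 ω) n) ∂ℙ ≤ ENNReal.ofReal n := by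
    calc ∫⁻ ω, ENNReal.ofReal (min (M 0 ω) n) ∂ℙ ≤ ∫⁻ _, ENNReal.ofReal n ∂ℙ :=
      lintegral_mono (fun ω => ENNReal.ofReal_le_ofReal (min_le_right _ _))
    _ = ENNReal.ofReal n := by simp
  have heq : mm M n = (∫⁻ ω, ENNReal.ofReal (min (M 0 ω) n) ∂ℙ).toReal := by
    rw [mm, integral_eq_lintegral_of_nonneg_ae
      (Eventually.of_forall (fun ω => le_min (hpos 0 ω).le (Nat.cast_nonneg n)))
      ((hmeas 0).min measurable_const).aestronglyMeasurable]
  rw [heq]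
  calc C ≤ (ENNReal.ofReal C).toReal := by
        rcases le_total C 0 with h | h
        · simp [ENNReal.ofReal_eq_zero.2 h] at *; linarith
        · rw [ENNReal.toReal_ofReal h]
  _ ≤ _ := ENNReal.toReal_mono (lt_of_le_of_lt hfin ENNReal.ofReal_lt_top).ne hn.le

end KestenProof
-- Stage 2: tk properties (appended to k1 content for testing)
namespace KestenProof

variable {Ω : Type*} [MeasureSpace Ω] [IsProbabilityMeasure (ℙ : Measure Ω)]
variable {M : ℕ → Ω → ℝ}

lemma exists_G_quarter (hpos : ∀ k ω, 0 < M k ω) :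
    ∃ u : ℝ, 0 < u ∧ (1:ℝ)/4 ≤ G M u := by
  have hU : (⋃ n : ℕ, {ω | (1:ℝ)/(n+1) < M 0 ω}) = Set.univ := by
    ext ω
    simp only [Set.mem_iUnion, Set.mem_setOf_eq, Set.mem_univ, iff_true]
    obtain ⟨n, hn⟩ := exists_nat_gt (1 / M 0 ω)
    refine ⟨n, ?_⟩
    rw [div_lt_iff₀ (hpos 0 ω)] at hn
    rw [div_lt_iff₀ (by positivity : (0:ℝ) < (n:ℝ)+1)]
    nlinarith [hpos 0 ω]
  have hmono : Monotone (fun n : ℕ => {ω | (1:ℝ)/(n+1) < M 0 ω}) := by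
    intro n m hnm ω h
    simp only [Set.mem_setOf_eq] at h ⊢
    refine lt_of_le_of_lt ?_ h
    refine one_div_le_one_div_of_le (by positivity) ?_
    have : (n:ℝ) ≤ (m:ℝ) := by exact_mod_cast hnm
    linarith
  have : ℙ (⋃ n : ℕ, {ω | (1:ℝ)/(n+1) < M 0 ω}) = ⨆ n : ℕ, ℙ {ω | (1:ℝ)/((n:ℝ)+1) < M 0 ω} :=
    Directed.measure_iUnion (Monotone.directed_le hmono)
  rw [hU, measure_univ] at this
  have h2 : (1/2 : ℝ≥0∞) < ⨆ n : ℕ, ℙ {ω | (1:ℝ)/((n:ℝ)+1) < M 0 ω} := by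
    rw [← this]; norm_num
  rw [lt_iSup_iff] at h2
  obtain ⟨n, hn⟩ := h2
  refine ⟨1/(n+1), by positivity, ?_⟩
  have : (1/2 : ℝ≥0∞) ≤ Ge M (1/(n+1)) := hn.le
  have h3 := ENNReal.toReal_mono (Ge_ne_top _) this
  rw [G]
  calc (1:ℝ)/4 ≤ (1/2 : ℝ≥0∞).toReal := by simp; norm_num
    _ ≤ _ := h3

lemma exists_G_small (hmeas : ∀ k, Measurable (M k)) {ε : ℝ} (hε : 0 < ε) :
    ∃ T : ℝ, 0 ≤ T ∧ G M T ≤ ε := by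
  have hI : (⋂ n : ℕ, {ω | (n:ℝ) < M 0 ω}) = ∅ := by
    ext ω
    simp only [Set.mem_iInter, Set.mem_setOf_eq, Set.mem_empty_iff_false, iff_false, not_forall,
      not_lt]
    obtain ⟨n, hn⟩ := exists_nat_gt (M 0 ω)
    exact ⟨n, hn.le⟩
  have hanti : Antitone (fun n : ℕ => {ω | (n:ℝ) < M 0 ω}) := by
    intro n m hnm ω h
    simp only [Set.mem_setOf_eq] at h ⊢
    exact lt_of_le_of_lt (by exact_mod_cast hnm) h
  have : (⨅ n : ℕ, ℙ {ω | ((n:ℕ):ℝ) < M 0 ω}) = ℙ (⋂ n : ℕ, {ω | (n:ℝ) < M 0 ω}) := by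
    refine (Directed.measure_iInter (fun n => ((hmeas 0) measurableSet_Ioi).nullMeasurableSet)
      (Antitone.directed_ge hanti) ⟨0, (measure_ne_top ℙ _)⟩).symm
  rw [hI, measure_empty] at this
  have h2 : (⨅ n : ℕ, ℙ {ω | ((n:ℕ):ℝ) < M 0 ω}) < ENNReal.ofReal ε := by
    rw [this]; exact ENNReal.ofReal_pos.mpr hε
  rw [iInf_lt_iff] at h2
  obtain ⟨n, hn⟩ := h2
  refine ⟨n, Nat.cast_nonneg n, ?_⟩
  rw [G]
  calc (Ge M n).toReal ≤ (ENNReal.ofReal ε).toReal :=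
        ENNReal.toReal_mono ENNReal.ofReal_ne_top hn.le
    _ = ε := ENNReal.toReal_ofReal hε.le

lemma Sset_nonempty (hpos : ∀ k ω, 0 < M k ω) {k : ℕ} (hk : 1 ≤ k)
    (hmeas : ∀ k, Measurable (M k)) :
    ∃ u : ℝ, 0 < u ∧ u ≤ 4 * (k:ℝ) * mm M u := by
  obtain ⟨u, hu, hG⟩ := exists_G_quarter hpos
  refine ⟨u, hu, ?_⟩
  have h1 : u * G M u ≤ mm M u := mul_G_le_mm hmeas hpos hu.le
  have hk' : (1:ℝ) ≤ (k:ℝ) := by exact_mod_cast hk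
  have h2 : u/4 ≤ mm M u := by nlinarith
  have h3 : 4*(k:ℝ)*(u/4) ≤ 4*(k:ℝ)*mm M u :=
    mul_le_mul_of_nonneg_left h2 (by positivity)
  nlinarith [mul_nonneg (sub_nonneg.mpr hk') hu.le]

lemma Sset_bdd (hmeas : ∀ k, Measurable (M k)) (hpos : ∀ k ω, 0 < M k ω) (k : ℕ) :
    BddAbove {u : ℝ | 0 < u ∧ u ≤ 4 * (k:ℝ) * mm M u} := by
  have hε : (0:ℝ) < 1/(8*((k:ℝ)+1)) := by positivity
  obtain ⟨T, hT0, hGT⟩ := exists_G_small hmeas hε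
  refine ⟨max T (8*((k:ℝ)+1)*(mm M T + 1)), ?_⟩
  rintro u ⟨hu0, hu⟩
  by_contra hcon
  push_neg at hcon
  rw [max_lt_iff] at hcon
  obtain ⟨h1, h2⟩ := hcon
  have hmmT : 0 ≤ mm M T := mm_nonneg hpos hT0
  have hincr : mm M u ≤ mm M T + (u - T) * G M T := mm_incr hmeas hpos hT0 h1.le
  have hGT0 : 0 ≤ G M T := G_nonneg T
  have hk0 : (0:ℝ) ≤ (k:ℝ) := Nat.cast_nonneg k
  -- u ≤ 4k * mm u ≤ 4k (mm T + u * ε) < u/2 + u/2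
  have step1 : (u - T) * G M T ≤ u * (1/(8*((k:ℝ)+1))) := by
    have : u - T ≤ u := by linarith
    nlinarith
  have step2 : 4*(k:ℝ)*mm M u ≤ 4*((k:ℝ)+1)*(mm M T) + 4*((k:ℝ)+1) * (u * (1/(8*((k:ℝ)+1)))) := by
    have hmmu : 0 ≤ mm M u := mm_nonneg hpos hu0.le
    have : mm M u ≤ mm M T + u * (1/(8*((k:ℝ)+1))) := by linarith
    nlinarith
  have step3 : 4*((k:ℝ)+1) * (u * (1/(8*((k:ℝ)+1)))) = u/2 := by
    field_simp; ring
  have step4 : 4*((k:ℝ)+1)*(mm M T) < u/2 := by nlinarith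
  linarith [hu, step2, step3.le]

lemma Sset_ne (hmeas : ∀ k, Measurable (M k)) (hpos : ∀ k ω, 0 < M k ω)
    {k : ℕ} (hk : 1 ≤ k) :
    Set.Nonempty {u : ℝ | 0 < u ∧ u ≤ 4 * (k:ℝ) * mm M u} := by
  obtain ⟨u, h1, h2⟩ := Sset_nonempty hpos hk hmeas
  exact ⟨u, h1, h2⟩

lemma tk_pos (hmeas : ∀ k, Measurable (M k)) (hpos : ∀ k ω, 0 < M k ω)
    {k : ℕ} (hk : 1 ≤ k) : 0 < tk M k := by
  obtain ⟨u, hu0, hu⟩ := Sset_nonempty hpos hk hmeas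
  exact lt_of_lt_of_le hu0 (le_csSup (Sset_bdd hmeas hpos k) ⟨hu0, hu⟩)

lemma tk_le (hmeas : ∀ k, Measurable (M k)) (hpos : ∀ k ω, 0 < M k ω)
    {k : ℕ} (hk : 1 ≤ k) : tk M k ≤ 4 * (k:ℝ) * mm M (tk M k) := by
  refine le_of_forall_lt (fun y hy => ?_)
  obtain ⟨u, ⟨hu0, hu⟩, hyu⟩ := exists_lt_of_lt_csSup (Sset_ne hmeas hpos hk) hy
  have hut : u ≤ tk M k := le_csSup (Sset_bdd hmeas hpos k) ⟨hu0, hu⟩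
  calc y < u := hyu
    _ ≤ 4 * (k:ℝ) * mm M u := hu
    _ ≤ 4 * (k:ℝ) * mm M (tk M k) := by
        have := mm_mono hmeas hpos hut
        have hk0 : (0:ℝ) ≤ (k:ℝ) := Nat.cast_nonneg k
        nlinarith

lemma tk_gt (hmeas : ∀ k, Measurable (M k)) (hpos : ∀ k ω, 0 < M k ω)
    {k : ℕ} (hk : 1 ≤ k) {s : ℝ} (hs : tk M k < s) : 4 * (k:ℝ) * mm M s < s := by
  have hs0 : 0 < s := lt_trans (tk_pos hmeas hpos hk) hs
  by_contra hcon
  push_neg at hcon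
  have : s ≤ tk M k := le_csSup (Sset_bdd hmeas hpos k) ⟨hs0, hcon⟩
  linarith

lemma tk_mono (hmeas : ∀ k, Measurable (M k)) (hpos : ∀ k ω, 0 < M k ω)
    {k l : ℕ} (hk : 1 ≤ k) (hkl : k ≤ l) : tk M k ≤ tk M l := by
  refine csSup_le_csSup (Sset_bdd hmeas hpos l) (Sset_ne hmeas hpos hk) ?_
  rintro u ⟨hu0, hu⟩
  refine ⟨hu0, le_trans hu ?_⟩
  have hmmu : 0 ≤ mm M u := mm_nonneg hpos hu0.le
  have : (k:ℝ) ≤ (l:ℝ) := by exact_mod_cast hkl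
  nlinarith

lemma tk_unbounded (hmeas : ∀ k, Measurable (M k)) (hpos : ∀ k ω, 0 < M k ω)
    (hmean : ∫⁻ ω, ENNReal.ofReal (M 0 ω) ∂ℙ = ⊤) (C : ℝ) :
    ∃ K : ℕ, 1 ≤ K ∧ ∀ k, K ≤ k → C ≤ tk M k := by
  set T := max C 1 with hT
  have hT0 : 0 < T := lt_of_lt_of_le one_pos (le_max_right _ _)
  have hmmT : 0 < mm M T := by
    have h1 : T * G M T ≤ mm M T := mul_G_le_mm hmeas hpos hT0.le
    have h2 : 0 < G M T := G_pos hmeas hmean T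
    nlinarith
  obtain ⟨K0, hK0⟩ := exists_nat_gt (T / (4 * mm M T))
  refine ⟨K0 + 1, le_add_self, fun k hk => ?_⟩
  have hk1 : 1 ≤ k := le_trans le_add_self hk
  have hTk : T ≤ 4 * (k:ℝ) * mm M T := by
    have hkK : (K0:ℝ) ≤ (k:ℝ) := by exact_mod_cast le_trans (Nat.le_succ K0) hk
    rw [div_lt_iff₀ (by positivity)] at hK0
    nlinarith
  calc C ≤ T := le_max_left _ _
    _ ≤ tk M k := le_csSup (Sset_bdd hmeas hpos k) ⟨hT0, hTk⟩

lemma tk_superadd (hmeas : ∀ k, Measurable (M k)) (hpos : ∀ k ω, 0 < M k ω)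
    {J k : ℕ} (hJ : 1 ≤ J) (hk : 1 ≤ k) : (J:ℝ) * tk M k ≤ tk M (J * k) := by
  have hJ0 : (0:ℝ) < (J:ℝ) := by exact_mod_cast hJ
  refine le_of_forall_lt (fun z hz => ?_)
  have hzJ : z / J < tk M k := by
    rw [div_lt_iff₀ hJ0]; linarith [hz]
  obtain ⟨u, ⟨hu0, hu⟩, hyu⟩ :=
    exists_lt_of_lt_csSup (Sset_ne hmeas hpos hk) hzJ
  have hmem : (J:ℝ) * u ≤ 4 * ((J*k : ℕ):ℝ) * mm M ((J:ℝ) * u) := by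
    have hJ1 : (1:ℝ) ≤ (J:ℝ) := by exact_mod_cast hJ
    have h1 : u ≤ (J:ℝ) * u := by nlinarith [mul_nonneg (sub_nonneg.mpr hJ1) hu0.le]
    have h2 : mm M u ≤ mm M ((J:ℝ)*u) := mm_mono hmeas hpos h1
    have h3 : ((J*k : ℕ):ℝ) = (J:ℝ)*(k:ℝ) := by push_cast; ring
    rw [h3]
    have hmmu : 0 ≤ mm M u := mm_nonneg hpos hu0.le
    nlinarith
  have hJu : (J:ℝ) * u ≤ tk M (J * k) :=
    le_csSup (Sset_bdd hmeas hpos (J*k)) ⟨by positivity, hmem⟩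
  calc z = (J:ℝ) * (z / J) := by field_simp
    _ < (J:ℝ) * u := by nlinarith
    _ ≤ tk M (J * k) := hJu

end KestenProof
namespace KestenProof

variable {Ω : Type*} [MeasureSpace Ω] [IsProbabilityMeasure (ℙ : Measure Ω)]
variable {M : ℕ → Ω → ℝ}

lemma prod_ratio_telescope (x : ℕ → ℝ) (hx : ∀ j, 0 < x j) {a b : ℕ} (hab : a ≤ b) :
    ∏ j ∈ Finset.Ico a b, (x j / x (j+1)) = x a / x b := by
  induction b, hab using Nat.le_induction with
  | base => simp [div_self (hx a).ne']
  | succ b hab ih =>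
    rw [Finset.prod_Ico_succ_top hab, ih, div_mul_div_comm, mul_comm (x a) (x b),
      mul_div_mul_left _ _ (hx b).ne']

lemma one_sub_prod_le_sum_one_sub (s : Finset ℕ) (r : ℕ → ℝ)
    (h0 : ∀ j ∈ s, 0 ≤ r j) (h1 : ∀ j ∈ s, r j ≤ 1) :
    1 - ∏ j ∈ s, r j ≤ ∑ j ∈ s, (1 - r j) := by
  classical
  induction s using Finset.induction_on with
  | empty => simp
  | insert a s ha ih =>
    rw [Finset.prod_insert ha, Finset.sum_insert ha]
    have hP0 : 0 ≤ ∏ j ∈ s, r j := Finset.prod_nonneg (fun j hj => h0 j (Finset.mem_insert_of_mem hj))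
    have hP1 : ∏ j ∈ s, r j ≤ 1 := Finset.prod_le_one
      (fun j hj => h0 j (Finset.mem_insert_of_mem hj)) (fun j hj => h1 j (Finset.mem_insert_of_mem hj))
    have ihs : 1 - ∏ j ∈ s, r j ≤ ∑ j ∈ s, (1 - r j) :=
      ih (fun j hj => h0 j (Finset.mem_insert_of_mem hj)) (fun j hj => h1 j (Finset.mem_insert_of_mem hj))
    have hra0 : 0 ≤ r a := h0 a (Finset.mem_insert_self a s)
    have hra1 : r a ≤ 1 := h1 a (Finset.mem_insert_self a s)
    nlinarith

lemma ratio_sum_unbounded (x : ℕ → ℝ) (hx : ∀ j, 0 < x j) (hmono : Monotone x)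
    (hub : ∀ C : ℝ, ∃ j, C ≤ x j) :
    ∀ C : ℝ, ∃ J : ℕ, C ≤ ∑ j ∈ Finset.range J, (1 - x j / x (j+1)) := by
  have hterm : ∀ j, 0 ≤ 1 - x j / x (j+1) := by
    intro j
    have := hmono (Nat.le_succ j)
    have := hx j
    have h2 : x j / x (j+1) ≤ 1 := div_le_one_of_le₀ (hmono (Nat.le_succ j)) (hx (j+1)).le
    linarith
  have step : ∀ J₀ : ℕ, ∃ J : ℕ, J₀ ≤ J ∧
      (1/2 : ℝ) ≤ ∑ j ∈ Finset.Ico J₀ J, (1 - x j / x (j+1)) := by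
    intro J₀
    obtain ⟨j₁, hj₁⟩ := hub (2 * x J₀)
    refine ⟨max j₁ J₀, le_max_right _ _, ?_⟩
    have hxJ : 2 * x J₀ ≤ x (max j₁ J₀) := le_trans hj₁ (hmono (le_max_left _ _))
    have h1 : 1 - ∏ j ∈ Finset.Ico J₀ (max j₁ J₀), (x j / x (j+1))
        ≤ ∑ j ∈ Finset.Ico J₀ (max j₁ J₀), (1 - x j / x (j+1)) :=
      one_sub_prod_le_sum_one_sub _ _
        (fun j _ => div_nonneg (hx j).le (hx (j+1)).le)
        (fun j _ => div_le_one_of_le₀ (hmono (Nat.le_succ j)) (hx (j+1)).le)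
    rw [prod_ratio_telescope x hx (le_max_right _ _)] at h1
    have h2 : x J₀ / x (max j₁ J₀) ≤ 1/2 := by
      rw [div_le_iff₀ (hx _)]
      linarith
    linarith
  -- iterate
  have main : ∀ n : ℕ, ∃ J : ℕ, (n : ℝ)/2 ≤ ∑ j ∈ Finset.range J, (1 - x j / x (j+1)) := by
    intro n
    induction n with
    | zero => exact ⟨0, by simp⟩
    | succ n ih =>
      obtain ⟨J, hJ⟩ := ih
      obtain ⟨J', hJJ', hJ'⟩ := step J
      refine ⟨J', ?_⟩
      have hsplit : ∑ j ∈ Finset.range J, (1 - x j / x (j+1))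
          + ∑ j ∈ Finset.Ico J J', (1 - x j / x (j+1))
          = ∑ j ∈ Finset.range J', (1 - x j / x (j+1)) := by
        rw [Finset.range_eq_Ico, Finset.range_eq_Ico]
        exact Finset.sum_Ico_consecutive _ (Nat.zero_le J) hJJ'
      push_cast
      linarith
  intro C
  obtain ⟨n, hn⟩ := exists_nat_gt (2*C)
  obtain ⟨J, hJ⟩ := main n
  exact ⟨J, by linarith⟩

lemma key_dyadic (hmeas : ∀ k, Measurable (M k)) (hpos : ∀ k ω, 0 < M k ω)
    (hmean : ∫⁻ ω, ENNReal.ofReal (M 0 ω) ∂ℙ = ⊤) (j : ℕ) :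
    (1/16 : ℝ) * (1 - mm M (tk M (2^(j+1))) / mm M (tk M (2^(j+2))))
      ≤ (2^j : ℝ) * G M (tk M (2^(j+1))) := by
  have h1j : (1:ℕ) ≤ 2^(j+1) := Nat.one_le_two_pow
  have h2j : (1:ℕ) ≤ 2^(j+2) := Nat.one_le_two_pow
  set a := tk M (2^(j+1)) with ha
  set b := tk M (2^(j+2)) with hb
  have hab : a ≤ b := tk_mono hmeas hpos h1j (Nat.pow_le_pow_right (by norm_num) (by omega))
  have ha0 : 0 < a := tk_pos hmeas hpos h1j
  set xa := mm M a with hxa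
  set xb := mm M b with hxb
  set g := G M a with hg
  have hxa0 : 0 < xa := by
    have := tk_le hmeas hpos h1j
    rw [← ha] at this
    by_contra hcon
    push_neg at hcon
    have : a ≤ 0 := by nlinarith [this]
    linarith
  have hxab : xa ≤ xb := mm_mono hmeas hpos hab
  have hxb0 : 0 < xb := lt_of_lt_of_le hxa0 hxab
  have hincr : xb ≤ xa + (b - a) * g := mm_incr hmeas hpos ha0.le hab
  have hble : b ≤ 4 * ((2^(j+2) : ℕ) : ℝ) * xb := tk_le hmeas hpos h2j
  have hg0 : 0 ≤ g := G_nonneg _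
  have hcast : ((2^(j+2) : ℕ) : ℝ) = 4 * 2^j := by push_cast; ring
  rw [hcast] at hble
  -- xb - xa ≤ (b-a) g ≤ b g ≤ 16 * 2^j * xb * g
  have key : xb - xa ≤ 16 * (2^j : ℝ) * xb * g := by nlinarith [mul_le_mul_of_nonneg_right hble hg0]
  have hdiv : 1 - xa / xb = (xb - xa) / xb := by field_simp
  rw [hdiv]
  have key2 : (xb - xa)/xb ≤ 16 * (2^j:ℝ) * g := by
    rw [div_le_iff₀ hxb0]; nlinarith
  calc (1/16 : ℝ) * ((xb - xa)/xb) ≤ (1/16) * (16 * (2^j:ℝ) * g) := by nlinarith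
    _ = (2^j : ℝ) * g := by ring

lemma dyadic_group (f : ℕ → ℝ) (J : ℕ) :
    ∑ l ∈ Finset.Ico 1 (2^J), f l = ∑ j ∈ Finset.range J, ∑ l ∈ Finset.Ico (2^j) (2^(j+1)), f l := by
  induction J with
  | zero => simp
  | succ J ih =>
    rw [Finset.sum_range_succ, ← ih]
    refine (Finset.sum_Ico_consecutive _ Nat.one_le_two_pow (Nat.pow_le_pow_right (by norm_num) (Nat.le_succ J))).symm

lemma G_tk_partial (hmeas : ∀ k, Measurable (M k)) (hpos : ∀ k ω, 0 < M k ω)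
    (hmean : ∫⁻ ω, ENNReal.ofReal (M 0 ω) ∂ℙ = ⊤) (C : ℝ) :
    ∃ K : ℕ, ∀ K', K ≤ K' → C ≤ ∑ l ∈ Finset.Ico 1 K', G M (tk M l) := by
  set x : ℕ → ℝ := fun j => mm M (tk M (2^(j+1))) with hxdef
  have hx : ∀ j, 0 < x j := by
    intro j
    have h1j : (1:ℕ) ≤ 2^(j+1) := Nat.one_le_two_pow
    have hle := tk_le hmeas hpos h1j
    have hpos' := tk_pos hmeas hpos (M := M) h1j
    by_contra hcon
    push_neg at hcon
    rw [hxdef] at hcon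
    simp only at hcon
    nlinarith
  have hmono : Monotone x := by
    intro i j hij
    exact mm_mono hmeas hpos (tk_mono hmeas hpos Nat.one_le_two_pow
      (Nat.pow_le_pow_right (by norm_num) (by omega)))
  have hub : ∀ C : ℝ, ∃ j, C ≤ x j := by
    intro C
    obtain ⟨n, hn⟩ := mm_unbounded hmeas hpos hmean C
    obtain ⟨K, hK1, hK⟩ := tk_unbounded hmeas hpos hmean (n : ℝ)
    obtain ⟨j, hj⟩ := exists_nat_gt (K : ℝ)
    refine ⟨j, le_trans hn (mm_mono hmeas hpos (hK _ ?_))⟩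
    have : (K:ℝ) ≤ (2^(j+1) : ℕ) := by
      calc (K:ℝ) ≤ j := hj.le
        _ ≤ ((2^(j+1) : ℕ) : ℝ) := by
            have h2 : j < 2^(j+1) :=
              lt_of_lt_of_le (Nat.lt_two_pow_self (n := j)) (Nat.pow_le_pow_right (by norm_num) (Nat.le_succ j))
            exact_mod_cast h2.le
    exact_mod_cast this
  obtain ⟨J, hJ⟩ := ratio_sum_unbounded x hx hmono hub (16 * C)
  refine ⟨2^J, fun K' hK' => ?_⟩
  have hsub : ∑ l ∈ Finset.Ico 1 (2^J), G M (tk M l) ≤ ∑ l ∈ Finset.Ico 1 K', G M (tk M l) := by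
    refine Finset.sum_le_sum_of_subset_of_nonneg ?_ (fun l _ _ => G_nonneg _)
    exact Finset.Ico_subset_Ico le_rfl hK'
  refine le_trans ?_ hsub
  rw [dyadic_group]
  have hper : ∀ j ∈ Finset.range J, (1/16 : ℝ) * (1 - x j / x (j+1))
      ≤ ∑ l ∈ Finset.Ico (2^j) (2^(j+1)), G M (tk M l) := by
    intro j _
    have hcard : (Finset.Ico (2^j) (2^(j+1))).card = 2^j := by
      rw [Nat.card_Ico, pow_succ]
      omega
    have hlow : ∀ l ∈ Finset.Ico (2^j) (2^(j+1)), G M (tk M (2^(j+1))) ≤ G M (tk M l) := by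
      intro l hl
      rw [Finset.mem_Ico] at hl
      refine G_anti (tk_mono hmeas hpos ?_ hl.2.le)
      exact le_trans Nat.one_le_two_pow hl.1
    have hsum : (2^j : ℝ) * G M (tk M (2^(j+1))) ≤ ∑ l ∈ Finset.Ico (2^j) (2^(j+1)), G M (tk M l) := by
      have := Finset.card_nsmul_le_sum (Finset.Ico (2^j) (2^(j+1)))
        (fun l => G M (tk M l)) (G M (tk M (2^(j+1)))) hlow
      rw [hcard] at this
      simpa [nsmul_eq_mul] using this
    refine le_trans ?_ hsum
    have := key_dyadic hmeas hpos hmean (M := M) j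
    exact this
  calc C = (1/16 : ℝ) * (16 * C) := by ring
    _ ≤ (1/16 : ℝ) * ∑ j ∈ Finset.range J, (1 - x j / x (j+1)) := by nlinarith
    _ = ∑ j ∈ Finset.range J, (1/16 : ℝ) * (1 - x j / x (j+1)) := by
        rw [Finset.mul_sum]
    _ ≤ ∑ j ∈ Finset.range J, ∑ l ∈ Finset.Ico (2^j) (2^(j+1)), G M (tk M l) :=
        Finset.sum_le_sum hper

lemma group_mult (f : ℕ → ℝ) {J : ℕ} (hJ : 1 ≤ J) (K : ℕ) :
    ∑ l ∈ Finset.Ico J (J*(K+1)), f l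
      = ∑ n ∈ Finset.Icc 1 K, ∑ l ∈ Finset.Ico (J*n) (J*n+J), f l := by
  induction K with
  | zero => simp
  | succ K ih =>
    have h1 : Finset.Icc 1 (K+1) = insert (K+1) (Finset.Icc 1 K) := by
      ext l
      simp only [Finset.mem_Icc, Finset.mem_insert]
      omega
    rw [h1, Finset.sum_insert (by simp), ← ih]
    have h2 : J*(K+1+1) = (J*(K+1)) + J := by ring
    rw [h2, ← Finset.sum_Ico_consecutive f
      (show J ≤ J*(K+1) by nlinarith) (show J*(K+1) ≤ J*(K+1)+J by omega)]
    rw [add_comm]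

lemma G_tk_mult_div (hmeas : ∀ k, Measurable (M k)) (hpos : ∀ k ω, 0 < M k ω)
    (hmean : ∫⁻ ω, ENNReal.ofReal (M 0 ω) ∂ℙ = ⊤) {J : ℕ} (hJ : 1 ≤ J) (C : ℝ) :
    ∃ K : ℕ, 1 ≤ K ∧ C ≤ ∑ n ∈ Finset.Icc 1 K, G M (tk M (J*n)) := by
  have hJR : (0:ℝ) < J := by exact_mod_cast hJ
  obtain ⟨K₀, hK₀⟩ := G_tk_partial hmeas hpos hmean (J * C + J)
  set K := max K₀ 1 with hK
  refine ⟨K, le_max_right _ _, ?_⟩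
  have hbig : K₀ ≤ J*(K+1) := by
    calc K₀ ≤ K := le_max_left _ _
      _ ≤ J*(K+1) := by nlinarith [hJ, le_max_right K₀ 1]
  have h0 := hK₀ _ hbig
  -- split off head
  have hsplit : ∑ l ∈ Finset.Ico 1 J, G M (tk M l) + ∑ l ∈ Finset.Ico J (J*(K+1)), G M (tk M l)
      = ∑ l ∈ Finset.Ico 1 (J*(K+1)), G M (tk M l) :=
    Finset.sum_Ico_consecutive _ hJ (by nlinarith)
  have hhead : ∑ l ∈ Finset.Ico 1 J, G M (tk M l) ≤ (J:ℝ) := by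
    have := Finset.sum_le_card_nsmul (Finset.Ico 1 J) (fun l => G M (tk M l)) 1
      (fun l _ => G_le_one _)
    rw [Nat.card_Ico] at this
    simp only [nsmul_eq_mul, mul_one] at this
    calc ∑ l ∈ Finset.Ico 1 J, G M (tk M l) ≤ ((J - 1 : ℕ) : ℝ) := this
      _ ≤ (J:ℝ) := by
          have : ((J-1:ℕ):ℝ) ≤ (J:ℝ) := by exact_mod_cast Nat.sub_le J 1
          linarith
  have htail : J * C ≤ ∑ l ∈ Finset.Ico J (J*(K+1)), G M (tk M l) := by linarith
  rw [group_mult _ hJ] at htail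
  have hper : ∀ n ∈ Finset.Icc 1 K, ∑ l ∈ Finset.Ico (J*n) (J*n+J), G M (tk M l)
      ≤ (J:ℝ) * G M (tk M (J*n)) := by
    intro n hn
    rw [Finset.mem_Icc] at hn
    have hJn : 1 ≤ J*n := by nlinarith [hn.1]
    have := Finset.sum_le_card_nsmul (Finset.Ico (J*n) (J*n+J)) (fun l => G M (tk M l))
      (G M (tk M (J*n))) ?_
    · rw [Nat.card_Ico] at this
      simpa [nsmul_eq_mul, Nat.add_sub_cancel_left] using this
    · intro l hl
      rw [Finset.mem_Ico] at hl
      exact G_anti (tk_mono hmeas hpos hJn hl.1)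
  have h2 : (J:ℝ) * C ≤ ∑ n ∈ Finset.Icc 1 K, (J:ℝ) * G M (tk M (J*n)) :=
    le_trans htail (Finset.sum_le_sum hper)
  rw [← Finset.mul_sum] at h2
  nlinarith

end KestenProof
namespace KestenProof

variable {Ω : Type*} [MeasureSpace Ω] [IsProbabilityMeasure (ℙ : Measure Ω)]

noncomputable def SS (M : ℕ → Ω → ℝ) (n : ℕ) (ω : Ω) : ℝ := ∑ i ∈ Finset.range n, M i ω

def Ev (M : ℕ → Ω → ℝ) (c n : ℕ) : Set Ω := {ω | (c:ℝ) * SS M n ω < M n ω}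

noncomputable def aa (M : ℕ → Ω → ℝ) (c n : ℕ) : ℝ≥0∞ := ℙ (Ev M c n)

variable {M : ℕ → Ω → ℝ}

lemma SS_meas (hmeas : ∀ k, Measurable (M k)) (n : ℕ) : Measurable (SS M n) :=
  Finset.measurable_sum _ (fun i _ => hmeas i)

lemma SS_nonneg (hpos : ∀ k ω, 0 < M k ω) (n : ℕ) (ω : Ω) : 0 ≤ SS M n ω :=
  Finset.sum_nonneg (fun i _ => (hpos i ω).le)

lemma SS_pos (hpos : ∀ k ω, 0 < M k ω) {n : ℕ} (hn : 1 ≤ n) (ω : Ω) : 0 < SS M n ω := by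
  rw [SS]
  refine Finset.sum_pos (fun i _ => hpos i ω) ?_
  exact ⟨0, Finset.mem_range.mpr hn⟩

lemma Ev_meas (hmeas : ∀ k, Measurable (M k)) (c n : ℕ) : MeasurableSet (Ev M c n) :=
  measurableSet_lt ((measurable_const).mul (SS_meas hmeas n)) (hmeas n)

lemma markov_SS (hmeas : ∀ k, Measurable (M k)) (hpos : ∀ k ω, 0 < M k ω)
    (hident : ∀ k, IdentDistrib (M k) (M 0) ℙ ℙ) {k : ℕ} (hk : 1 ≤ k) :
    ℙ {ω | 2 * tk M k < SS M k ω} ≤ ENNReal.ofReal (1/2) := by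
  set s := 2 * tk M k with hs
  have htk0 : 0 < tk M k := tk_pos hmeas hpos hk
  have hs0 : 0 < s := by rw [hs]; linarith
  have hsgt : tk M k < s := by rw [hs]; linarith
  have hmain : 4 * (k:ℝ) * mm M s < s := tk_gt hmeas hpos hk hsgt
  have hmm0 : 0 ≤ mm M s := mm_nonneg hpos hs0.le
  have hk0 : (0:ℝ) < (k:ℝ) := by exact_mod_cast hk
  -- inclusion
  have hincl : {ω | s < SS M k ω} ⊆
      (⋃ i ∈ Finset.range k, {ω | s < M i ω}) ∪ {ω | s ≤ ∑ i ∈ Finset.range k, min (M i ω) s} := by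
    intro ω hω
    simp only [Set.mem_setOf_eq] at hω
    by_cases hcase : ∃ i ∈ Finset.range k, s < M i ω
    · left
      obtain ⟨i, hi, hsi⟩ := hcase
      exact Set.mem_biUnion hi hsi
    · right
      push_neg at hcase
      have : ∀ i ∈ Finset.range k, min (M i ω) s = M i ω :=
        fun i hi => min_eq_left (hcase i hi)
      simp only [Set.mem_setOf_eq]
      rw [Finset.sum_congr rfl this]
      exact le_of_lt hω
  refine le_trans (measure_mono hincl) (le_trans (measure_union_le _ _) ?_)
  have hpart1 : ℙ (⋃ i ∈ Finset.range k, {ω | s < M i ω}) ≤ ENNReal.ofReal (1/4) := by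
    refine le_trans (measure_biUnion_finset_le _ _) ?_
    have hGe : ∀ i ∈ Finset.range k, ℙ {ω | s < M i ω} = ENNReal.ofReal (G M s) := by
      intro i _
      rw [Ge_eq hident i s, Ge_eq_ofReal]
    rw [Finset.sum_congr rfl hGe, Finset.sum_const, Finset.card_range, nsmul_eq_mul]
    have hG : (k:ℝ) * G M s ≤ 1/4 := by
      have h1 : s * G M s ≤ mm M s := mul_G_le_mm hmeas hpos hs0.le
      have hG0 : 0 ≤ G M s := G_nonneg _
      -- k * G s ≤ k * mm s / s < 1/4
      nlinarith
    calc (k : ℝ≥0∞) * ENNReal.ofReal (G M s) = ENNReal.ofReal ((k:ℝ) * G M s) := by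
          rw [ENNReal.ofReal_mul (by positivity)]
          congr 1
          simp [ENNReal.ofReal_natCast]
      _ ≤ ENNReal.ofReal (1/4) := ENNReal.ofReal_le_ofReal hG
  have hpart2 : ℙ {ω | s ≤ ∑ i ∈ Finset.range k, min (M i ω) s} ≤ ENNReal.ofReal (1/4) := by
    set f := fun ω => ∑ i ∈ Finset.range k, min (M i ω) s with hf
    have hfint : Integrable f ℙ := integrable_finset_sum _ (fun i _ => integrable_min hmeas hpos i s)
    have hfnn : 0 ≤ᵐ[ℙ] f := Eventually.of_forall (fun ω =>
      Finset.sum_nonneg (fun i _ => le_min (hpos i ω).le hs0.le))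
    have hmark := mul_meas_ge_le_integral_of_nonneg hfnn hfint s
    have hint : ∫ ω, f ω ∂ℙ = (k:ℝ) * mm M s := by
      rw [hf, integral_finset_sum _ (fun i _ => integrable_min hmeas hpos i s)]
      rw [Finset.sum_congr rfl (fun i _ => mm_eq hmeas hident i s)]
      rw [Finset.sum_const, Finset.card_range, nsmul_eq_mul]
    rw [hint] at hmark
    have htoReal : (ℙ {ω | s ≤ f ω}).toReal ≤ 1/4 := by
      have h4 : (k:ℝ) * mm M s ≤ s/4 := by linarith
      have h5 := le_trans hmark h4
      rw [measureReal_def] at h5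
      nlinarith [h5, hs0, ENNReal.toReal_nonneg (a := ℙ {ω | s ≤ f ω})]
    calc ℙ {ω | s ≤ f ω} = ENNReal.ofReal ((ℙ {ω | s ≤ f ω}).toReal) := by
          rw [ENNReal.ofReal_toReal (measure_ne_top _ _)]
      _ ≤ ENNReal.ofReal (1/4) := ENNReal.ofReal_le_ofReal htoReal
  calc ℙ (⋃ i ∈ Finset.range k, {ω | s < M i ω}) + ℙ {ω | s ≤ ∑ i ∈ Finset.range k, min (M i ω) s}
      ≤ ENNReal.ofReal (1/4) + ENNReal.ofReal (1/4) := add_le_add hpart1 hpart2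
    _ = ENNReal.ofReal (1/2) := by
        rw [← ENNReal.ofReal_add (by norm_num) (by norm_num)]
        norm_num

lemma SS_conc (hmeas : ∀ k, Measurable (M k)) (hpos : ∀ k ω, 0 < M k ω)
    (hident : ∀ k, IdentDistrib (M k) (M 0) ℙ ℙ) {k : ℕ} (hk : 1 ≤ k) :
    ENNReal.ofReal (1/2) ≤ ℙ {ω | SS M k ω ≤ 2 * tk M k} := by
  have hcompl : {ω | SS M k ω ≤ 2 * tk M k} = {ω | 2 * tk M k < SS M k ω}ᶜ := by
    ext ω; simp [not_lt]
  rw [hcompl, measure_compl (measurableSet_lt measurable_const (SS_meas hmeas k))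
    (measure_ne_top _ _), measure_univ]
  have h1 := markov_SS hmeas hpos hident (M := M) hk
  have h2 : ENNReal.ofReal (1/2) + ℙ {ω | 2 * tk M k < SS M k ω} ≤ 1 := by
    calc ENNReal.ofReal (1/2) + ℙ {ω | 2 * tk M k < SS M k ω}
        ≤ ENNReal.ofReal (1/2) + ENNReal.ofReal (1/2) := add_le_add le_rfl h1
      _ = 1 := by
          rw [← ENNReal.ofReal_add (by norm_num) (by norm_num)]
          norm_num
  exact ENNReal.le_sub_of_add_le_right (measure_ne_top _ _) h2

lemma indep_MS (hiid : iIndepFun M ℙ)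
    (hmeas : ∀ k, Measurable (M k)) (n : ℕ) :
    IndepFun (M n) (SS M n) ℙ := by
  have hdisj : Disjoint ({n} : Finset ℕ) (Finset.range n) := by
    rw [Finset.disjoint_singleton_left]
    simp
  have hbase := hiid.indepFun_finset {n} (Finset.range n) hdisj hmeas
  have hφ : Measurable (fun v : (({n} : Finset ℕ) : Type) → ℝ => v ⟨n, Finset.mem_singleton_self n⟩) :=
    measurable_pi_apply _
  have hψ : Measurable (fun v : ((Finset.range n : Finset ℕ) : Type) → ℝ => ∑ i, v i) :=
    Finset.measurable_sum _ (fun i _ => measurable_pi_apply i)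
  have h := hbase.comp hφ hψ
  have heq1 : ((fun v : (({n} : Finset ℕ) : Type) → ℝ => v ⟨n, Finset.mem_singleton_self n⟩)
      ∘ (fun a (i : ({n} : Finset ℕ)) => M i a)) = M n := rfl
  have heq2 : ((fun v : ((Finset.range n : Finset ℕ) : Type) → ℝ => ∑ i, v i)
      ∘ (fun a (i : (Finset.range n : Finset ℕ)) => M i a)) = SS M n := by
    funext a
    simp only [Function.comp_apply, SS]
    exact Finset.sum_coe_sort (Finset.range n) (fun i => M i a)
  rwa [heq1, heq2] at h

lemma aa_lower (hiid : iIndepFun M ℙ)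
    (hmeas : ∀ k, Measurable (M k)) (hpos : ∀ k ω, 0 < M k ω)
    (hident : ∀ k, IdentDistrib (M k) (M 0) ℙ ℙ)
    {c n : ℕ} (hc : 1 ≤ c) (hn : 1 ≤ n) :
    ENNReal.ofReal (1/2 * G M (tk M (2*c*n))) ≤ aa M c n := by
  have htk0 : 0 < tk M n := tk_pos hmeas hpos hn
  have hsub : (M n ⁻¹' Set.Ioi (2*(c:ℝ)*tk M n)) ∩ (SS M n ⁻¹' Set.Iic (2*tk M n)) ⊆ Ev M c n := by
    rintro ω ⟨h1, h2⟩
    simp only [Set.mem_preimage, Set.mem_Ioi] at h1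
    simp only [Set.mem_preimage, Set.mem_Iic] at h2
    have hc0 : (0:ℝ) < (c:ℝ) := by exact_mod_cast hc
    show (c:ℝ) * SS M n ω < M n ω
    nlinarith
  have hmul := (indep_MS hiid hmeas n).measure_inter_preimage_eq_mul
    (Set.Ioi (2*(c:ℝ)*tk M n)) (Set.Iic (2*tk M n)) measurableSet_Ioi measurableSet_Iic
  have hle1 : ENNReal.ofReal (G M (tk M (2*c*n))) ≤ ℙ (M n ⁻¹' Set.Ioi (2*(c:ℝ)*tk M n)) := by
    have h1 : ℙ (M n ⁻¹' Set.Ioi (2*(c:ℝ)*tk M n)) = Ge M (2*(c:ℝ)*tk M n) := by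
      rw [← set_eq]
      exact Ge_eq hident n _
    rw [h1]
    have h2 : 2*(c:ℝ)*tk M n ≤ tk M (2*c*n) := by
      have h3 := tk_superadd hmeas hpos (J := 2*c) (k := n) (by omega) hn
      have hcast : ((2*c : ℕ):ℝ) = 2*(c:ℝ) := by push_cast; ring
      rw [hcast] at h3
      exact h3
    calc ENNReal.ofReal (G M (tk M (2*c*n))) = Ge M (tk M (2*c*n)) := (Ge_eq_ofReal _).symm
      _ ≤ Ge M (2*(c:ℝ)*tk M n) := Ge_anti h2
  have hle2 : ENNReal.ofReal (1/2) ≤ ℙ (SS M n ⁻¹' Set.Iic (2*tk M n)) := by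
    have : SS M n ⁻¹' Set.Iic (2*tk M n) = {ω | SS M n ω ≤ 2 * tk M n} := rfl
    rw [this]
    exact SS_conc hmeas hpos hident hn
  calc ENNReal.ofReal (1/2 * G M (tk M (2*c*n)))
      = ENNReal.ofReal (G M (tk M (2*c*n))) * ENNReal.ofReal (1/2) := by
        rw [← ENNReal.ofReal_mul (G_nonneg _)]
        ring_nf
    _ ≤ ℙ (M n ⁻¹' Set.Ioi (2*(c:ℝ)*tk M n)) * ℙ (SS M n ⁻¹' Set.Iic (2*tk M n)) :=
        mul_le_mul' hle1 hle2
    _ = ℙ ((M n ⁻¹' Set.Ioi (2*(c:ℝ)*tk M n)) ∩ (SS M n ⁻¹' Set.Iic (2*tk M n))) := hmul.symm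
    _ ≤ aa M c n := measure_mono hsub

lemma aa_tsum_top (hiid : iIndepFun M ℙ)
    (hmeas : ∀ k, Measurable (M k)) (hpos : ∀ k ω, 0 < M k ω)
    (hident : ∀ k, IdentDistrib (M k) (M 0) ℙ ℙ)
    (hmean : ∫⁻ ω, ENNReal.ofReal (M 0 ω) ∂ℙ = ⊤)
    {c : ℕ} (hc : 1 ≤ c) : ∑' n, aa M c n = ⊤ := by
  by_contra hcon
  have hS : ∑' n, aa M c n < ⊤ := lt_top_iff_ne_top.mpr hcon
  set Sv := ∑' n, aa M c n with hSv
  obtain ⟨K, hK1, hK⟩ := G_tk_mult_div hmeas hpos hmean (J := 2*c) (by omega)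
    (2 * (Sv.toReal + 1))
  have hsum : ∑ n ∈ Finset.Icc 1 K, aa M c n ≤ Sv := ENNReal.sum_le_tsum _
  have hlower : ENNReal.ofReal (Sv.toReal + 1) ≤ ∑ n ∈ Finset.Icc 1 K, aa M c n := by
    calc ENNReal.ofReal (Sv.toReal + 1)
        ≤ ENNReal.ofReal (∑ n ∈ Finset.Icc 1 K, 1/2 * G M (tk M (2*c*n))) := by
          refine ENNReal.ofReal_le_ofReal ?_
          rw [← Finset.mul_sum]
          linarith
      _ = ∑ n ∈ Finset.Icc 1 K, ENNReal.ofReal (1/2 * G M (tk M (2*c*n))) := by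
          rw [ENNReal.ofReal_sum_of_nonneg]
          intro n _
          have := G_nonneg (M := M) (tk M (2*c*n))
          positivity
      _ ≤ ∑ n ∈ Finset.Icc 1 K, aa M c n := by
          refine Finset.sum_le_sum (fun n hn => ?_)
          rw [Finset.mem_Icc] at hn
          exact aa_lower hiid hmeas hpos hident hc hn.1
  have : ENNReal.ofReal (Sv.toReal + 1) ≤ Sv := le_trans hlower hsum
  have hfin : Sv = ENNReal.ofReal (Sv.toReal) := by
    rw [ENNReal.ofReal_toReal hcon]
  rw [hfin] at this
  have := ENNReal.toReal_mono (by simp) this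
  rw [ENNReal.toReal_ofReal (by positivity), ENNReal.toReal_ofReal ENNReal.toReal_nonneg] at this
  linarith

end KestenProof
namespace KestenProof

variable {Ω : Type*} [MeasureSpace Ω] [IsProbabilityMeasure (ℙ : Measure Ω)]
variable {M : ℕ → Ω → ℝ}

lemma indep_Msum (hiid : iIndepFun M ℙ)
    (hmeas : ∀ k, Measurable (M k)) {q : ℕ} {I : Finset ℕ} (hq : q ∉ I) :
    IndepFun (M q) (fun ω => ∑ l ∈ I, M l ω) ℙ := by
  have hdisj : Disjoint ({q} : Finset ℕ) I := by
    rwa [Finset.disjoint_singleton_left]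
  have hbase := hiid.indepFun_finset {q} I hdisj hmeas
  have hφ : Measurable (fun v : (({q} : Finset ℕ) : Type) → ℝ => v ⟨q, Finset.mem_singleton_self q⟩) :=
    measurable_pi_apply _
  have hψ : Measurable (fun v : ((I : Finset ℕ) : Type) → ℝ => ∑ i, v i) :=
    Finset.measurable_sum _ (fun i _ => measurable_pi_apply i)
  have h := hbase.comp hφ hψ
  have heq1 : ((fun v : (({q} : Finset ℕ) : Type) → ℝ => v ⟨q, Finset.mem_singleton_self q⟩)
      ∘ (fun a (i : (({q} : Finset ℕ) : Type)) => M i a)) = M q := rfl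
  have heq2 : ((fun v : ((I : Finset ℕ) : Type) → ℝ => ∑ i, v i)
      ∘ (fun a (i : ((I : Finset ℕ) : Type)) => M i a)) = (fun ω => ∑ l ∈ I, M l ω) := by
    funext a
    simp only [Function.comp_apply]
    exact Finset.sum_coe_sort I (fun i => M i a)
  rwa [heq1, heq2] at h

lemma sum_identDistrib (hiid : iIndepFun M ℙ)
    (hmeas : ∀ k, Measurable (M k)) (hident : ∀ k, IdentDistrib (M k) (M 0) ℙ ℙ)
    (I : Finset ℕ) :
    IdentDistrib (fun ω => ∑ l ∈ I, M l ω) (SS M I.card) ℙ ℙ := by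
  classical
  induction I using Finset.induction_on with
  | empty =>
    have h1 : (fun ω : Ω => ∑ l ∈ (∅ : Finset ℕ), M l ω) = fun _ => (0:ℝ) := by
      funext ω; simp
    have h2 : SS M (∅ : Finset ℕ).card = fun _ => (0:ℝ) := by
      funext ω; simp [SS]
    rw [h1, h2]
    exact IdentDistrib.refl aemeasurable_const
  | insert a I' ha ih =>
    -- pair (M a, ∑_{I'}) identDistrib pair (M I'.card, SS I'.card)
    have hmeasSum : Measurable (fun ω => ∑ l ∈ I', M l ω) :=
      Finset.measurable_sum _ (fun i _ => hmeas i)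
    have hpair : IdentDistrib (fun ω => (M a ω, ∑ l ∈ I', M l ω))
        (fun ω => (M I'.card ω, SS M I'.card ω)) ℙ ℙ := by
      refine ⟨((hmeas a).prodMk hmeasSum).aemeasurable,
        ((hmeas I'.card).prodMk (SS_meas hmeas I'.card)).aemeasurable, ?_⟩
      have hi1 : IndepFun (M a) (fun ω => ∑ l ∈ I', M l ω) ℙ := indep_Msum hiid hmeas ha
      have hi2 : IndepFun (M I'.card) (SS M I'.card) ℙ := indep_MS hiid hmeas I'.card
      rw [(indepFun_iff_map_prod_eq_prod_map_map (hmeas a).aemeasurable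
          hmeasSum.aemeasurable).1 hi1,
        (indepFun_iff_map_prod_eq_prod_map_map (hmeas I'.card).aemeasurable
          (SS_meas hmeas I'.card).aemeasurable).1 hi2,
        ((hident a).trans (hident I'.card).symm).map_eq, ih.map_eq]
    have hsum := hpair.comp (show Measurable (fun p : ℝ × ℝ => p.1 + p.2) from measurable_fst.add measurable_snd)
    have heq1 : ((fun p : ℝ × ℝ => p.1 + p.2) ∘ (fun ω => (M a ω, ∑ l ∈ I', M l ω)))
        = fun ω => ∑ l ∈ insert a I', M l ω := by
      funext ω
      simp only [Function.comp_apply]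
      rw [Finset.sum_insert ha]
    have heq2 : ((fun p : ℝ × ℝ => p.1 + p.2) ∘ (fun ω => (M I'.card ω, SS M I'.card ω)))
        = SS M (insert a I').card := by
      funext ω
      simp only [Function.comp_apply, SS]
      rw [Finset.card_insert_of_notMem ha, Finset.sum_range_succ, add_comm]
    rwa [heq1, heq2] at hsum

lemma pair_identDistrib (hiid : iIndepFun M ℙ)
    (hmeas : ∀ k, Measurable (M k)) (hident : ∀ k, IdentDistrib (M k) (M 0) ℙ ℙ)
    {q : ℕ} {I : Finset ℕ} (hq : q ∉ I) :
    IdentDistrib (fun ω => (M q ω, ∑ l ∈ I, M l ω))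
      (fun ω => (M I.card ω, SS M I.card ω)) ℙ ℙ := by
  have hmeasSum : Measurable (fun ω => ∑ l ∈ I, M l ω) :=
    Finset.measurable_sum _ (fun i _ => hmeas i)
  refine ⟨((hmeas q).prodMk hmeasSum).aemeasurable,
    ((hmeas I.card).prodMk (SS_meas hmeas I.card)).aemeasurable, ?_⟩
  have hi1 : IndepFun (M q) (fun ω => ∑ l ∈ I, M l ω) ℙ := indep_Msum hiid hmeas hq
  have hi2 : IndepFun (M I.card) (SS M I.card) ℙ := indep_MS hiid hmeas I.card
  rw [(indepFun_iff_map_prod_eq_prod_map_map (hmeas q).aemeasurable hmeasSum.aemeasurable).1 hi1,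
    (indepFun_iff_map_prod_eq_prod_map_map (hmeas I.card).aemeasurable
      (SS_meas hmeas I.card).aemeasurable).1 hi2,
    ((hident q).trans (hident I.card).symm).map_eq,
    (sum_identDistrib hiid hmeas hident I).map_eq]

lemma block_prob (hiid : iIndepFun M ℙ)
    (hmeas : ∀ k, Measurable (M k)) (hident : ∀ k, IdentDistrib (M k) (M 0) ℙ ℙ)
    (c : ℕ) {q : ℕ} {I : Finset ℕ} (hq : q ∉ I) :
    ℙ {ω | (c:ℝ) * ∑ l ∈ I, M l ω < M q ω} = aa M c I.card := by
  have hE : MeasurableSet {p : ℝ × ℝ | (c:ℝ) * p.2 < p.1} :=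
    measurableSet_lt (measurable_const.mul measurable_snd) measurable_fst
  have h := (pair_identDistrib hiid hmeas hident hq).measure_mem_eq hE
  have h1 : (fun ω => (M q ω, ∑ l ∈ I, M l ω)) ⁻¹' {p : ℝ × ℝ | (c:ℝ) * p.2 < p.1}
      = {ω | (c:ℝ) * ∑ l ∈ I, M l ω < M q ω} := rfl
  have h2 : (fun ω => (M I.card ω, SS M I.card ω)) ⁻¹' {p : ℝ × ℝ | (c:ℝ) * p.2 < p.1}
      = Ev M c I.card := rfl
  rw [h1, h2] at h
  exact h

lemma cross_indep (hiid : iIndepFun M ℙ)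
    (hmeas : ∀ k, Measurable (M k)) (c : ℕ) {i j : ℕ} (hij : i < j) :
    ℙ (Ev M c i ∩ {ω | (c:ℝ) * ∑ l ∈ Finset.Ico (i+1) j, M l ω < M j ω})
      = aa M c i * ℙ {ω | (c:ℝ) * ∑ l ∈ Finset.Ico (i+1) j, M l ω < M j ω} := by
  classical
  have hdisj : Disjoint (Finset.range (i+1)) (Finset.Icc (i+1) j) := by
    rw [Finset.disjoint_left]
    intro x hx hx'
    rw [Finset.mem_range] at hx
    rw [Finset.mem_Icc] at hx'
    omega
  have hbase := hiid.indepFun_finset (Finset.range (i+1)) (Finset.Icc (i+1) j) hdisj hmeas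
  have hiR : i ∈ Finset.range (i+1) := Finset.mem_range.mpr (Nat.lt_succ_self i)
  have hjI : j ∈ Finset.Icc (i+1) j := Finset.mem_Icc.mpr ⟨hij, le_rfl⟩
  let Φ : ({ x // x ∈ Finset.range (i+1) } → ℝ) → ℝ × ℝ :=
    fun v => (v ⟨i, hiR⟩, ∑ l ∈ (Finset.range i).attach,
      v ⟨l.1, Finset.mem_range.mpr (Nat.lt_succ_of_lt (Finset.mem_range.mp l.2))⟩)
  let Ψ : ({ x // x ∈ Finset.Icc (i+1) j } → ℝ) → ℝ × ℝ :=
    fun v => (v ⟨j, hjI⟩, ∑ l ∈ (Finset.Ico (i+1) j).attach,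
      v ⟨l.1, Finset.mem_Icc.mpr ⟨(Finset.mem_Ico.mp l.2).1, le_of_lt (Finset.mem_Ico.mp l.2).2⟩⟩)
  have hΦm : Measurable Φ := Measurable.prodMk (measurable_pi_apply _)
    (Finset.measurable_sum _ (fun l _ => measurable_pi_apply _))
  have hΨm : Measurable Ψ := Measurable.prodMk (measurable_pi_apply _)
    (Finset.measurable_sum _ (fun l _ => measurable_pi_apply _))
  have h := hbase.comp hΦm hΨm
  have heq1 : (Φ ∘ (fun a (x : { x // x ∈ Finset.range (i+1) }) => M x.1 a))
      = fun ω => (M i ω, SS M i ω) := by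
    funext ω
    simp only [Function.comp_apply, Φ]
    refine Prod.ext rfl ?_
    show (∑ l ∈ (Finset.range i).attach, M l.1 ω) = SS M i ω
    rw [SS]
    exact Finset.sum_attach (Finset.range i) (fun l => M l ω)
  have heq2 : (Ψ ∘ (fun a (x : { x // x ∈ Finset.Icc (i+1) j }) => M x.1 a))
      = fun ω => (M j ω, ∑ l ∈ Finset.Ico (i+1) j, M l ω) := by
    funext ω
    simp only [Function.comp_apply, Ψ]
    refine Prod.ext rfl ?_
    show (∑ l ∈ (Finset.Ico (i+1) j).attach, M l.1 ω) = _
    exact Finset.sum_attach (Finset.Ico (i+1) j) (fun l => M l ω)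
  rw [heq1, heq2] at h
  have hE : MeasurableSet {p : ℝ × ℝ | (c:ℝ) * p.2 < p.1} :=
    measurableSet_lt (measurable_const.mul measurable_snd) measurable_fst
  have hmul := h.measure_inter_preimage_eq_mul _ _ hE hE
  have hpre1 : (fun ω => (M i ω, SS M i ω)) ⁻¹' {p : ℝ × ℝ | (c:ℝ) * p.2 < p.1} = Ev M c i := rfl
  have hpre2 : (fun ω => (M j ω, ∑ l ∈ Finset.Ico (i+1) j, M l ω)) ⁻¹'
      {p : ℝ × ℝ | (c:ℝ) * p.2 < p.1} = {ω | (c:ℝ) * ∑ l ∈ Finset.Ico (i+1) j, M l ω < M j ω} := rfl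
  rw [hpre1, hpre2] at hmul
  rw [hmul, aa]

lemma cross_bound (hiid : iIndepFun M ℙ)
    (hmeas : ∀ k, Measurable (M k)) (hident : ∀ k, IdentDistrib (M k) (M 0) ℙ ℙ)
    (hpos : ∀ k ω, 0 < M k ω) (c : ℕ) {i j : ℕ} (hij : i < j) :
    ℙ (Ev M c i ∩ Ev M c j) ≤ aa M c i * aa M c (j - i - 1) := by
  have hsub : Ev M c j ⊆ {ω | (c:ℝ) * ∑ l ∈ Finset.Ico (i+1) j, M l ω < M j ω} := by
    intro ω hω
    have h1 : ∑ l ∈ Finset.Ico (i+1) j, M l ω ≤ SS M j ω := by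
      refine Finset.sum_le_sum_of_subset_of_nonneg ?_ (fun l _ _ => (hpos l ω).le)
      intro l hl
      rw [Finset.mem_Ico] at hl
      exact Finset.mem_range.mpr hl.2
    have h2 : (c:ℝ) * SS M j ω < M j ω := hω
    have hc0 : (0:ℝ) ≤ (c:ℝ) := Nat.cast_nonneg c
    show (c:ℝ) * ∑ l ∈ Finset.Ico (i+1) j, M l ω < M j ω
    nlinarith
  have hjI : j ∉ Finset.Ico (i+1) j := by simp
  have hcard : (Finset.Ico (i+1) j).card = j - i - 1 := by
    rw [Nat.card_Ico]; omega
  calc ℙ (Ev M c i ∩ Ev M c j)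
      ≤ ℙ (Ev M c i ∩ {ω | (c:ℝ) * ∑ l ∈ Finset.Ico (i+1) j, M l ω < M j ω}) :=
        measure_mono (Set.inter_subset_inter_right _ hsub)
    _ = aa M c i * ℙ {ω | (c:ℝ) * ∑ l ∈ Finset.Ico (i+1) j, M l ω < M j ω} :=
        cross_indep hiid hmeas c hij
    _ = aa M c i * aa M c (j - i - 1) := by
        rw [block_prob hiid hmeas hident c hjI, hcard]

end KestenProof
namespace KestenProof

variable {Ω : Type*} [MeasureSpace Ω] [IsProbabilityMeasure (ℙ : Measure Ω)]
variable {M : ℕ → Ω → ℝ}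

lemma ind_mul (A B : Set Ω) (ω : Ω) :
    (A.indicator (1 : Ω → ℝ≥0∞) ω) * (B.indicator (1 : Ω → ℝ≥0∞) ω)
      = (A ∩ B).indicator (1 : Ω → ℝ≥0∞) ω := by
  classical
  by_cases hA : ω ∈ A <;> by_cases hB : ω ∈ B <;>
    simp [Set.indicator_of_mem, Set.indicator_of_notMem, hA, hB, Set.mem_inter_iff]

lemma aa_le_one (c n : ℕ) : aa M c n ≤ 1 := prob_le_one

lemma aa_pos (hiid : iIndepFun M ℙ)
    (hmeas : ∀ k, Measurable (M k)) (hpos : ∀ k ω, 0 < M k ω)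
    (hident : ∀ k, IdentDistrib (M k) (M 0) ℙ ℙ)
    (hmean : ∫⁻ ω, ENNReal.ofReal (M 0 ω) ∂ℙ = ⊤)
    {c n : ℕ} (hc : 1 ≤ c) (hn : 1 ≤ n) : 0 < aa M c n := by
  refine lt_of_lt_of_le ?_ (aa_lower hiid hmeas hpos hident hc hn)
  rw [ENNReal.ofReal_pos]
  have := G_pos hmeas hmean (M := M) (tk M (2*c*n))
  linarith

/-- Kochen-Stone style second moment bound -/
lemma union_ge_half (hiid : iIndepFun M ℙ)
    (hmeas : ∀ k, Measurable (M k)) (hpos : ∀ k ω, 0 < M k ω)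
    (hident : ∀ k, IdentDistrib (M k) (M 0) ℙ ℙ)
    (hmean : ∫⁻ ω, ENNReal.ofReal (M 0 ω) ∂ℙ = ⊤)
    {c : ℕ} (hc : 1 ≤ c) (N : ℕ) :
    ENNReal.ofReal (1/2) ≤ ℙ (⋃ n : ℕ, Ev M c (N + n + 1)) := by
  classical
  set U : Set Ω := ⋃ n : ℕ, Ev M c (N + n + 1) with hU
  have hUmeas : MeasurableSet U := MeasurableSet.iUnion (fun n => Ev_meas hmeas c _)
  by_contra hcon
  push_neg at hcon
  set u : ℝ := (ℙ U).toReal with hu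
  have hufin : ℙ U ≠ ⊤ := measure_ne_top _ _
  have hu12 : u < 1/2 := by
    have := ENNReal.toReal_strict_mono (by simp : ENNReal.ofReal (1/2) ≠ ⊤) hcon
    rwa [ENNReal.toReal_ofReal (by norm_num)] at this
  have hu0 : 0 ≤ u := ENNReal.toReal_nonneg
  -- main inequality for each M'
  have main : ∀ M' : ℕ, N + 1 ≤ M' →
      (∑ n ∈ Finset.Icc (N+1) M', aa M c n).toReal
        ≤ (1 + 2 * (∑ m ∈ Finset.range (M'+1), aa M c m).toReal) * u := by
    intro M' hM'
    set s : Finset ℕ := Finset.Icc (N+1) M' with hsdef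
    set W : Ω → ℝ≥0∞ := fun ω => ∑ n ∈ s, (Ev M c n).indicator (1 : Ω → ℝ≥0∞) ω with hW
    have hWmeas : Measurable W :=
      Finset.measurable_sum _ (fun n _ => (measurable_one.indicator (Ev_meas hmeas c n)))
    set D : ℝ≥0∞ := ∑ n ∈ s, aa M c n with hD
    set P : ℝ≥0∞ := ∑ m ∈ Finset.range (M'+1), aa M c m with hP
    have hPfin : P ≠ ⊤ := by
      refine (lt_of_le_of_lt ?_ (lt_top_iff_ne_top.mpr (by simp) : ((M'+1 : ℕ) : ℝ≥0∞) < ⊤)).ne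
      calc P ≤ ∑ _m ∈ Finset.range (M'+1), 1 := Finset.sum_le_sum (fun m _ => aa_le_one c m)
        _ = ((M'+1 : ℕ) : ℝ≥0∞) := by simp
    have hDP : D ≤ P := by
      refine Finset.sum_le_sum_of_subset ?_
      intro x hx
      rw [hsdef, Finset.mem_Icc] at hx
      rw [Finset.mem_range]
      omega
    have hDfin : D ≠ ⊤ := (lt_of_le_of_lt hDP (lt_top_iff_ne_top.mpr hPfin)).ne
    have hD0 : D ≠ 0 := by
      have hmem : N + 1 ∈ s := by rw [hsdef, Finset.mem_Icc]; omega
      have : 0 < aa M c (N+1) := aa_pos hiid hmeas hpos hident hmean hc (by omega)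
      refine fun h0 => this.ne' ?_
      have := Finset.sum_eq_zero_iff.mp h0
      exact this (N+1) hmem
    -- first moment
    have hEW : ∫⁻ ω, W ω ∂ℙ = D := by
      rw [hW, lintegral_finset_sum _ (fun n _ => measurable_one.indicator (Ev_meas hmeas c n))]
      exact Finset.sum_congr rfl (fun n _ => lintegral_indicator_one (Ev_meas hmeas c n))
    -- second moment
    have hEW2 : ∫⁻ ω, W ω * W ω ∂ℙ ≤ D + 2 * D * P := by
      have hptw : ∀ ω, W ω * W ω = ∑ i ∈ s, ∑ j ∈ s, (Ev M c i ∩ Ev M c j).indicator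
          (1 : Ω → ℝ≥0∞) ω := by
        intro ω
        rw [hW, Finset.sum_mul_sum]
        exact Finset.sum_congr rfl (fun i _ => Finset.sum_congr rfl
          (fun j _ => ind_mul _ _ ω))
      have hint : ∫⁻ ω, W ω * W ω ∂ℙ = ∑ i ∈ s, ∑ j ∈ s, ℙ (Ev M c i ∩ Ev M c j) := by
        simp_rw [hptw]
        rw [lintegral_finset_sum _ (fun i _ => Finset.measurable_sum _
          (fun j _ => measurable_one.indicator ((Ev_meas hmeas c i).inter (Ev_meas hmeas c j))))]
        refine Finset.sum_congr rfl (fun i _ => ?_)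
        rw [lintegral_finset_sum _ (fun j _ =>
          measurable_one.indicator ((Ev_meas hmeas c i).inter (Ev_meas hmeas c j)))]
        exact Finset.sum_congr rfl (fun j _ =>
          lintegral_indicator_one ((Ev_meas hmeas c i).inter (Ev_meas hmeas c j)))
      rw [hint]
      -- three-way split
      have hsplit : ∀ i ∈ s, ∀ j ∈ s, ℙ (Ev M c i ∩ Ev M c j)
          ≤ (if i = j then aa M c i else 0)
            + ((if i < j then ℙ (Ev M c i ∩ Ev M c j) else 0)
              + (if j < i then ℙ (Ev M c i ∩ Ev M c j) else 0)) := by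
        intro i _ j _
        rcases lt_trichotomy i j with h | h | h
        · simp [h, h.ne, lt_asymm h]
        · subst h
          simp only [if_pos rfl, lt_irrefl, if_false, add_zero]
          rw [Set.inter_self]
          exact le_rfl
        · simp [h, h.ne', lt_asymm h]
      have hbound : ∑ i ∈ s, ∑ j ∈ s, ℙ (Ev M c i ∩ Ev M c j)
          ≤ ∑ i ∈ s, ∑ j ∈ s, ((if i = j then aa M c i else 0)
            + ((if i < j then ℙ (Ev M c i ∩ Ev M c j) else 0)
              + (if j < i then ℙ (Ev M c i ∩ Ev M c j) else 0))) :=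
        Finset.sum_le_sum (fun i hi => Finset.sum_le_sum (fun j hj => hsplit i hi j hj))
      refine le_trans hbound ?_
      have hdistrib : (∑ i ∈ s, ∑ j ∈ s, ((if i = j then aa M c i else 0)
            + ((if i < j then ℙ (Ev M c i ∩ Ev M c j) else 0)
              + (if j < i then ℙ (Ev M c i ∩ Ev M c j) else 0))))
          = (∑ i ∈ s, ∑ j ∈ s, (if i = j then aa M c i else 0))
            + ((∑ i ∈ s, ∑ j ∈ s, (if i < j then ℙ (Ev M c i ∩ Ev M c j) else 0))
              + (∑ i ∈ s, ∑ j ∈ s, (if j < i then ℙ (Ev M c i ∩ Ev M c j) else 0))) := by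
        simp_rw [Finset.sum_add_distrib]
      rw [hdistrib]
      -- diagonal
      have hdiag : (∑ i ∈ s, ∑ j ∈ s, (if i = j then aa M c i else 0)) = D := by
        refine Finset.sum_congr rfl (fun i hi => ?_)
        have : ∀ j ∈ s, (if i = j then aa M c i else 0) = (if j = i then aa M c i else 0) := by
          intro j _
          by_cases h : i = j
          · rw [if_pos h, if_pos h.symm]
          · rw [if_neg h, if_neg (fun h' => h h'.symm)]
        rw [Finset.sum_congr rfl this, Finset.sum_ite_eq' s i (fun _ => aa M c i), if_pos hi]
      -- upper triangle
      have htri : ∀ i ∈ s, (∑ j ∈ s, (if i < j then ℙ (Ev M c i ∩ Ev M c j) else 0))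
          ≤ aa M c i * P := by
        intro i hi
        have hi1 : 1 ≤ i := by
          rw [hsdef, Finset.mem_Icc] at hi; omega
        have h1 : ∀ j ∈ s, (if i < j then ℙ (Ev M c i ∩ Ev M c j) else 0)
            ≤ (if i < j then aa M c i * aa M c (j - i - 1) else 0) := by
          intro j _
          by_cases h : i < j
          · rw [if_pos h, if_pos h]
            exact cross_bound hiid hmeas hident hpos c h
          · rw [if_neg h, if_neg h]
        refine le_trans (Finset.sum_le_sum h1) ?_
        rw [← Finset.sum_filter]
        have h2 : ∑ j ∈ s.filter (fun j => i < j), aa M c i * aa M c (j - i - 1)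
            = aa M c i * ∑ j ∈ s.filter (fun j => i < j), aa M c (j - i - 1) := by
          rw [Finset.mul_sum]
        rw [h2]
        refine mul_le_mul' le_rfl ?_
        have hinj : ∀ x ∈ s.filter (fun j => i < j), ∀ y ∈ s.filter (fun j => i < j),
            x - i - 1 = y - i - 1 → x = y := by
          intro x hx y hy hxy
          rw [Finset.mem_filter] at hx hy
          omega
        rw [← Finset.sum_image hinj]
        refine Finset.sum_le_sum_of_subset ?_
        intro m hm
        rw [Finset.mem_image] at hm
        obtain ⟨j, hj, hjm⟩ := hm
        rw [Finset.mem_filter, hsdef, Finset.mem_Icc] at hj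
        rw [Finset.mem_range]
        omega
      -- lower triangle: swap
      have htri2 : (∑ i ∈ s, ∑ j ∈ s, (if j < i then ℙ (Ev M c i ∩ Ev M c j) else 0))
          ≤ D * P := by
        rw [Finset.sum_comm]
        have : ∀ j ∈ s, (∑ i ∈ s, (if j < i then ℙ (Ev M c i ∩ Ev M c j) else 0))
            ≤ aa M c j * P := by
          intro j hj
          have h0 : ∀ i ∈ s, (if j < i then ℙ (Ev M c i ∩ Ev M c j) else 0)
              = (if j < i then ℙ (Ev M c j ∩ Ev M c i) else 0) := by
            intro i _
            rw [Set.inter_comm]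
          rw [Finset.sum_congr rfl h0]
          exact htri j hj
        refine le_trans (Finset.sum_le_sum this) ?_
        rw [← Finset.sum_mul]
      have htri1 : (∑ i ∈ s, ∑ j ∈ s, (if i < j then ℙ (Ev M c i ∩ Ev M c j) else 0))
          ≤ D * P := by
        have := Finset.sum_le_sum (fun i hi => htri i hi)
        refine le_trans this ?_
        rw [← Finset.sum_mul]
      calc (∑ i ∈ s, ∑ j ∈ s, (if i = j then aa M c i else 0))
            + ((∑ i ∈ s, ∑ j ∈ s, (if i < j then ℙ (Ev M c i ∩ Ev M c j) else 0))
              + (∑ i ∈ s, ∑ j ∈ s, (if j < i then ℙ (Ev M c i ∩ Ev M c j) else 0)))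
          ≤ D + (D * P + D * P) := by
            rw [hdiag]
            exact add_le_add le_rfl (add_le_add htri1 htri2)
        _ = D + 2 * D * P := by ring
    -- Cauchy-Schwarz / Paley-Zygmund
    have hWU : ∀ ω, W ω = W ω * U.indicator (1 : Ω → ℝ≥0∞) ω := by
      intro ω
      by_cases h : ω ∈ U
      · rw [Set.indicator_of_mem h, Pi.one_apply, mul_one]
      · have hW0 : W ω = 0 := by
          rw [hW]
          refine Finset.sum_eq_zero (fun n hn => ?_)
          rw [hsdef, Finset.mem_Icc] at hn
          refine Set.indicator_of_notMem (fun hmem => h ?_) _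
          rw [hU]
          refine Set.mem_iUnion.mpr ⟨n - N - 1, ?_⟩
          have : N + (n - N - 1) + 1 = n := by omega
          rwa [this]
        rw [Set.indicator_of_notMem h, hW0, mul_zero]
    have hconj : Real.HolderConjugate 2 2 := by constructor <;> norm_num
    have hholder := ENNReal.lintegral_mul_le_Lp_mul_Lq ℙ hconj
      hWmeas.aemeasurable ((measurable_one.indicator hUmeas).aemeasurable
        : AEMeasurable (U.indicator (1 : Ω → ℝ≥0∞)) ℙ)
    have hLHS : ∫⁻ ω, (W * U.indicator (1 : Ω → ℝ≥0∞)) ω ∂ℙ = D := by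
      rw [← hEW]
      refine lintegral_congr (fun ω => ?_)
      exact (hWU ω).symm
    have hg2 : ∫⁻ ω, (U.indicator (1 : Ω → ℝ≥0∞) ω) ^ (2:ℝ) ∂ℙ = ℙ U := by
      have : ∀ ω, (U.indicator (1 : Ω → ℝ≥0∞) ω) ^ (2:ℝ) = U.indicator (1 : Ω → ℝ≥0∞) ω := by
        intro ω
        by_cases h : ω ∈ U
        · rw [Set.indicator_of_mem h, Pi.one_apply, ENNReal.one_rpow]
        · rw [Set.indicator_of_notMem h, ENNReal.zero_rpow_of_pos (by norm_num)]
      simp_rw [this]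
      exact lintegral_indicator_one hUmeas
    have hf2 : ∫⁻ ω, (W ω) ^ (2:ℝ) ∂ℙ = ∫⁻ ω, W ω * W ω ∂ℙ := by
      refine lintegral_congr (fun ω => ?_)
      rw [show ((2:ℝ)) = ((2:ℕ):ℝ) from by norm_num, ENNReal.rpow_natCast, pow_two]
    rw [hLHS, hf2, hg2] at hholder
    -- square both sides
    have hsq : D * D ≤ (∫⁻ ω, W ω * W ω ∂ℙ) * ℙ U := by
      calc D * D ≤ ((∫⁻ ω, W ω * W ω ∂ℙ) ^ (1/2:ℝ) * (ℙ U) ^ (1/2:ℝ))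
            * ((∫⁻ ω, W ω * W ω ∂ℙ) ^ (1/2:ℝ) * (ℙ U) ^ (1/2:ℝ)) := mul_le_mul' hholder hholder
        _ = ((∫⁻ ω, W ω * W ω ∂ℙ) ^ (1/2:ℝ) * (∫⁻ ω, W ω * W ω ∂ℙ) ^ (1/2:ℝ))
            * ((ℙ U) ^ (1/2:ℝ) * (ℙ U) ^ (1/2:ℝ)) := by ring
        _ = (∫⁻ ω, W ω * W ω ∂ℙ) * ℙ U := by
            rw [← ENNReal.rpow_add_of_nonneg (1/2) (1/2) (by norm_num) (by norm_num),
              ← ENNReal.rpow_add_of_nonneg (1/2) (1/2) (by norm_num) (by norm_num)]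
            norm_num
    have hsq2 : D * D ≤ (D + 2 * D * P) * ℙ U :=
      le_trans hsq (mul_le_mul' hEW2 le_rfl)
    have hfact : (D + 2 * D * P) * ℙ U = D * ((1 + 2 * P) * ℙ U) := by ring
    rw [hfact] at hsq2
    have hDle : D ≤ (1 + 2 * P) * ℙ U := by
      rwa [ENNReal.mul_le_mul_iff_right hD0 hDfin] at hsq2
    -- to real
    have h2Pfin : (1 + 2 * P) ≠ ⊤ := by
      simp [ENNReal.add_ne_top, ENNReal.mul_ne_top, hPfin]
    have := ENNReal.toReal_mono (ENNReal.mul_ne_top h2Pfin hufin) hDle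
    rw [ENNReal.toReal_mul] at this
    refine le_trans this ?_
    have heq : (1 + 2 * P).toReal = 1 + 2 * P.toReal := by
      rw [ENNReal.toReal_add (by simp) (ENNReal.mul_ne_top (by simp) hPfin),
        ENNReal.toReal_mul]
      norm_num
    rw [heq, ← hu]
  -- now get contradiction from unboundedness of P
  have hHfin : (∑ m ∈ Finset.range (N+1), aa M c m) ≠ ⊤ := by
    refine (lt_of_le_of_lt (Finset.sum_le_sum (fun m _ => aa_le_one c m)) ?_).ne
    calc ∑ _m ∈ Finset.range (N+1), (1:ℝ≥0∞) = ((N+1 : ℕ) : ℝ≥0∞) := by simp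
      _ < ⊤ := by simp
  set H : ℝ := (∑ m ∈ Finset.range (N+1), aa M c m).toReal with hH
  -- partial sums unbounded
  have hub : ∀ R : ℝ, ∃ m : ℕ, ENNReal.ofReal R < ∑ i ∈ Finset.range m, aa M c i := by
    intro R
    have htop := aa_tsum_top hiid hmeas hpos hident hmean hc
    rw [ENNReal.tsum_eq_iSup_nat] at htop
    have : ENNReal.ofReal R < ⨆ i, ∑ a ∈ Finset.range i, aa M c a := by
      rw [htop]; exact ENNReal.ofReal_lt_top
    rwa [lt_iSup_iff] at this
  obtain ⟨m, hm⟩ := hub ((u + H + 2)/(1 - 2*u))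
  set M' : ℕ := max (m - 1) (N + 1) with hM'
  have hM'1 : N + 1 ≤ M' := le_max_right _ _
  have hmle : m ≤ M' + 1 := by omega
  set Pv : ℝ≥0∞ := ∑ i ∈ Finset.range (M'+1), aa M c i with hPv
  have hPvfin : Pv ≠ ⊤ := by
    refine (lt_of_le_of_lt (Finset.sum_le_sum (fun i _ => aa_le_one c i)) ?_).ne
    calc ∑ _i ∈ Finset.range (M'+1), (1:ℝ≥0∞) = ((M'+1 : ℕ) : ℝ≥0∞) := by simp
      _ < ⊤ := by simp
  have hPbig : (u + H + 2)/(1 - 2*u) ≤ Pv.toReal := by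
    have h1 : ∑ i ∈ Finset.range m, aa M c i ≤ Pv :=
      Finset.sum_le_sum_of_subset (Finset.range_subset_range.mpr hmle)
    have h2 : ENNReal.ofReal ((u + H + 2)/(1 - 2*u)) ≤ Pv := le_trans hm.le h1
    have h3 := ENNReal.toReal_mono hPvfin h2
    rcases le_total ((u + H + 2)/(1 - 2*u)) 0 with h | h
    · exact le_trans h ENNReal.toReal_nonneg
    · rwa [ENNReal.toReal_ofReal h] at h3
  -- split P = H + D
  have hsplitP : Pv = (∑ m ∈ Finset.range (N+1), aa M c m) + ∑ n ∈ Finset.Icc (N+1) M', aa M c n := by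
    rw [hPv]
    have : Finset.range (M'+1) = Finset.range (N+1) ∪ Finset.Icc (N+1) M' := by
      ext x
      simp only [Finset.mem_range, Finset.mem_union, Finset.mem_Icc]
      omega
    rw [this, Finset.sum_union]
    rw [Finset.disjoint_left]
    intro x hx hx'
    rw [Finset.mem_range] at hx
    rw [Finset.mem_Icc] at hx'
    omega
  have hDfin2 : (∑ n ∈ Finset.Icc (N+1) M', aa M c n) ≠ ⊤ := by
    refine (lt_of_le_of_lt (Finset.sum_le_sum (fun i _ => aa_le_one c i)) ?_).ne
    rw [Finset.sum_const, nsmul_eq_mul, mul_one]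
    exact ENNReal.natCast_lt_top _
  have hPtoReal : Pv.toReal = H + (∑ n ∈ Finset.Icc (N+1) M', aa M c n).toReal := by
    rw [hsplitP, ENNReal.toReal_add hHfin hDfin2]
  have hmain := main M' hM'1
  rw [← hPv] at hmain
  -- final arithmetic
  have h1u : 0 < 1 - 2*u := by linarith
  have hH0 : 0 ≤ H := ENNReal.toReal_nonneg
  have hfinal : Pv.toReal ≤ (u + H)/(1 - 2*u) := by
    have hD' : Pv.toReal - H ≤ (1 + 2 * Pv.toReal) * u := by
      have heq2 : (∑ n ∈ Finset.Icc (N+1) M', aa M c n).toReal = Pv.toReal - H := by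
        rw [hPtoReal]; ring
      linarith [hmain, heq2]
    rw [le_div_iff₀ h1u]
    nlinarith
  have : (u + H + 2)/(1 - 2*u) ≤ (u + H)/(1 - 2*u) := le_trans hPbig hfinal
  rw [div_le_div_iff₀ h1u h1u] at this
  nlinarith

lemma iInter_ge_half (hiid : iIndepFun M ℙ)
    (hmeas : ∀ k, Measurable (M k)) (hpos : ∀ k ω, 0 < M k ω)
    (hident : ∀ k, IdentDistrib (M k) (M 0) ℙ ℙ)
    (hmean : ∫⁻ ω, ENNReal.ofReal (M 0 ω) ∂ℙ = ⊤)
    {c : ℕ} (hc : 1 ≤ c) :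
    ENNReal.ofReal (1/2) ≤ ℙ (⋂ N : ℕ, ⋃ n : ℕ, Ev M c (N + n + 1)) := by
  have hanti : Antitone (fun N : ℕ => ⋃ n : ℕ, Ev M c (N + n + 1)) := by
    intro N N' hNN'
    refine Set.iUnion_subset (fun n => ?_)
    refine Set.subset_iUnion_of_subset (n + (N' - N)) ?_
    have : N + (n + (N' - N)) + 1 = N' + n + 1 := by omega
    rw [this]
  have htend := tendsto_measure_iInter_atTop (μ := ℙ)
    (fun N => (MeasurableSet.iUnion (fun n => Ev_meas hmeas c _)).nullMeasurableSet)
    hanti ⟨0, measure_ne_top _ _⟩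
  refine ge_of_tendsto htend ?_
  refine Eventually.of_forall (fun N => ?_)
  exact union_ge_half hiid hmeas hpos hident hmean hc N

end KestenProof
namespace KestenProof

variable {Ω : Type*} [MeasureSpace Ω] [IsProbabilityMeasure (ℙ : Measure Ω)]

def Am (M : ℕ → Ω → ℝ) (mstart c n : ℕ) : Set Ω :=
  {ω | (c:ℝ) * ∑ l ∈ Finset.Ico mstart n, M l ω < M n ω}

def Em (M : ℕ → Ω → ℝ) (mstart : ℕ) : Set Ω :=
  ⋂ c : ℕ, ⋂ N : ℕ, ⋃ n : ℕ, Am M mstart (c+1) (mstart + N + n + 1)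

def Tt (M : ℕ → Ω → ℝ) : Set Ω := ⋃ mstart : ℕ, Em M mstart

variable {M : ℕ → Ω → ℝ}

lemma Am_zero (c n : ℕ) : Am M 0 c n = Ev M c n := by
  have h : Finset.Ico 0 n = Finset.range n := (Finset.range_eq_Ico n).symm
  ext ω
  simp only [Am, Ev, SS, Set.mem_setOf_eq, h]

lemma Am_mono_start (hpos : ∀ k ω, 0 < M k ω) (m c n : ℕ) :
    Am M m (c+1) n ⊆ Am M (m+1) (c+1) n := by
  intro ω hω
  have hsub : ∑ l ∈ Finset.Ico (m+1) n, M l ω ≤ ∑ l ∈ Finset.Ico m n, M l ω := by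
    refine Finset.sum_le_sum_of_subset_of_nonneg ?_ (fun l _ _ => (hpos l ω).le)
    refine Finset.Ico_subset_Ico (by omega) le_rfl
  have h := hω
  simp only [Am, Set.mem_setOf_eq] at h ⊢
  have hc : (0:ℝ) ≤ (c:ℝ)+1 := by positivity
  have hcast : ((c+1 : ℕ):ℝ) = (c:ℝ)+1 := by push_cast; ring
  rw [hcast] at h ⊢
  nlinarith

lemma Em_mono (hpos : ∀ k ω, 0 < M k ω) {m m' : ℕ} (hmm : m ≤ m') :
    Em M m ⊆ Em M m' := by
  induction m', hmm using Nat.le_induction with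
  | base => exact le_rfl
  | succ m' hmm ih =>
    refine le_trans ih ?_
    intro ω hω
    simp only [Em, Set.mem_iInter] at hω ⊢
    intro c N
    obtain ⟨n, hn⟩ := Set.mem_iUnion.mp (hω c (N+1))
    refine Set.mem_iUnion.mpr ⟨n, ?_⟩
    have hidx : m' + (N+1) + n + 1 = (m'+1) + N + n + 1 := by ring
    rw [hidx] at hn
    exact Am_mono_start hpos m' c _ hn

lemma Ev_anti (hpos : ∀ k ω, 0 < M k ω) {c c' n : ℕ} (hcc : c ≤ c') :
    Ev M c' n ⊆ Ev M c n := by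
  intro ω hω
  simp only [Ev, Set.mem_setOf_eq] at hω ⊢
  have h1 : (c:ℝ) ≤ (c':ℝ) := by exact_mod_cast hcc
  have h2 : 0 ≤ SS M n ω := SS_nonneg hpos n ω
  nlinarith

lemma Em0_ge_half (hiid : iIndepFun M ℙ)
    (hmeas : ∀ k, Measurable (M k)) (hpos : ∀ k ω, 0 < M k ω)
    (hident : ∀ k, IdentDistrib (M k) (M 0) ℙ ℙ)
    (hmean : ∫⁻ ω, ENNReal.ofReal (M 0 ω) ∂ℙ = ⊤) :
    ENNReal.ofReal (1/2) ≤ ℙ (Em M 0) := by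
  have hEq : Em M 0 = ⋂ c : ℕ, ⋂ N : ℕ, ⋃ n : ℕ, Ev M (c+1) (N + n + 1) := by
    simp only [Em, zero_add, Am_zero]
  rw [hEq]
  set L : ℕ → Set Ω := fun c => ⋂ N : ℕ, ⋃ n : ℕ, Ev M (c+1) (N + n + 1) with hL
  have hLmeas : ∀ c, MeasurableSet (L c) := fun c =>
    MeasurableSet.iInter (fun N => MeasurableSet.iUnion (fun n => Ev_meas hmeas _ _))
  have hanti : Antitone L := by
    intro c c' hcc
    refine Set.iInter_mono (fun N => Set.iUnion_mono (fun n => ?_))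
    exact Ev_anti hpos (by omega)
  have htend := tendsto_measure_iInter_atTop (μ := ℙ) (fun c => (hLmeas c).nullMeasurableSet)
    hanti ⟨0, measure_ne_top _ _⟩
  refine ge_of_tendsto htend (Eventually.of_forall (fun c => ?_))
  exact iInter_ge_half hiid hmeas hpos hident hmean (by omega)

lemma comap_meas (hmeas : ∀ k, Measurable (M k)) (NN l : ℕ) (hl : NN ≤ l) :
    Measurable[⨆ i : ℕ, MeasurableSpace.comap (M (i + NN)) inferInstance] (M l) := by
  have h1 : Measurable[MeasurableSpace.comap (M l) inferInstance] (M l) := by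
    intro s hs
    exact ⟨s, hs, rfl⟩
  have h2 : l - NN + NN = l := Nat.sub_add_cancel hl
  have h3 := le_iSup (fun i : ℕ => MeasurableSpace.comap (M (i + NN)) inferInstance) (l - NN)
  simp only [h2] at h3
  exact h1.mono h3 le_rfl

lemma Tt_tail_meas (hmeas : ∀ k, Measurable (M k)) (hpos : ∀ k ω, 0 < M k ω) (NN : ℕ) :
    MeasurableSet[⨆ i : ℕ, MeasurableSpace.comap (M (i + NN)) inferInstance] (Tt M) := by
  set 𝔪 := ⨆ i : ℕ, MeasurableSpace.comap (M (i + NN)) inferInstance with h𝔪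
  have hTt : Tt M = ⋃ m : ℕ, Em M (m + NN) := by
    refine Set.Subset.antisymm ?_ ?_
    · refine Set.iUnion_subset (fun m => ?_)
      refine le_trans (Em_mono hpos (Nat.le_add_right m NN) : Em M m ⊆ Em M (m + NN)) ?_
      exact Set.subset_iUnion (fun m => Em M (m + NN)) m
    · exact Set.iUnion_subset (fun m => Set.subset_iUnion (Em M) (m + NN))
  rw [hTt]
  refine MeasurableSet.iUnion (fun m => ?_)
  refine MeasurableSet.iInter (fun c => ?_)
  refine MeasurableSet.iInter (fun N => ?_)
  refine MeasurableSet.iUnion (fun n => ?_)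
  have hsum : Measurable[𝔪] (fun ω => ∑ l ∈ Finset.Ico (m + NN) ((m + NN) + N + n + 1), M l ω) := by
    refine Finset.measurable_sum _ (fun l hl => ?_)
    rw [Finset.mem_Ico] at hl
    exact comap_meas hmeas NN l (by omega)
  exact measurableSet_lt (measurable_const.mul hsum) (comap_meas hmeas NN _ (by omega))

lemma Tt_zero_or_one (hiid : iIndepFun M ℙ)
    (hmeas : ∀ k, Measurable (M k)) (hpos : ∀ k ω, 0 < M k ω) :
    ℙ (Tt M) = 0 ∨ ℙ (Tt M) = 1 := by
  set s : ℕ → MeasurableSpace Ω := fun n => MeasurableSpace.comap (M n) inferInstance with hs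
  have h_le : ∀ n, s n ≤ (inferInstance : MeasurableSpace Ω) := by
    intro n t ht
    obtain ⟨t', ht', rfl⟩ := ht
    exact hmeas n ht'
  have h_indep : iIndep s ℙ := hiid.iIndep
  refine measure_zero_or_one_of_measurableSet_limsup_atTop h_le h_indep ?_
  rw [limsup_eq_iInf_iSup_of_nat']
  rw [MeasurableSpace.measurableSet_iInf]
  intro NN
  exact Tt_tail_meas hmeas hpos NN

lemma S_bounded_null (hiid : iIndepFun M ℙ)
    (hmeas : ∀ k, Measurable (M k)) (hpos : ∀ k ω, 0 < M k ω)
    (hident : ∀ k, IdentDistrib (M k) (M 0) ℙ ℙ)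
    (hmean : ∫⁻ ω, ENNReal.ofReal (M 0 ω) ∂ℙ = ⊤) (R : ℕ) :
    ℙ (⋂ n : ℕ, {ω | SS M n ω ≤ (R:ℝ)}) = 0 := by
  set q : ℝ≥0∞ := ℙ {ω | M 0 ω ≤ (R:ℝ)} with hq
  have hq1 : q < 1 := by
    have hcompl : {ω | M 0 ω ≤ (R:ℝ)} = {ω | (R:ℝ) < M 0 ω}ᶜ := by
      ext ω; simp [not_lt]
    rw [hq, hcompl, measure_compl (by rw [set_eq]; exact hmeas 0 measurableSet_Ioi)
      (measure_ne_top _ _), measure_univ]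
    refine ENNReal.sub_lt_self ENNReal.one_ne_top one_ne_zero ?_
    exact (Ge_pos hmeas hmean (R:ℝ)).ne'
  have hbound : ∀ k : ℕ, ℙ (⋂ n : ℕ, {ω | SS M n ω ≤ (R:ℝ)}) ≤ q ^ k := by
    intro k
    have hsub : (⋂ n : ℕ, {ω | SS M n ω ≤ (R:ℝ)}) ⊆ ⋂ i ∈ Finset.range k, M i ⁻¹' Set.Iic (R:ℝ) := by
      intro ω hω
      simp only [Set.mem_iInter] at hω
      refine Set.mem_biInter (fun i hi => ?_)
      simp only [Set.mem_preimage, Set.mem_Iic]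
      have h1 := hω (i+1)
      have h2 : M i ω ≤ SS M (i+1) ω := by
        rw [SS, Finset.sum_range_succ]
        have : 0 ≤ ∑ l ∈ Finset.range i, M l ω := Finset.sum_nonneg (fun l _ => (hpos l ω).le)
        linarith
      exact le_trans h2 h1
    refine le_trans (measure_mono hsub) ?_
    rw [hiid.measure_inter_preimage_eq_mul (Finset.range k)
      (sets := fun _ => Set.Iic (R:ℝ)) (fun i _ => measurableSet_Iic)]
    have heach : ∀ i ∈ Finset.range k, ℙ (M i ⁻¹' Set.Iic (R:ℝ)) = q := by
      intro i _
      rw [hq]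
      exact (hident i).measure_mem_eq measurableSet_Iic
    rw [Finset.prod_congr rfl heach, Finset.prod_const, Finset.card_range]
  have htends : Tendsto (fun k : ℕ => q ^ k) atTop (nhds 0) :=
    ENNReal.tendsto_pow_atTop_nhds_zero_of_lt_one hq1
  have := ge_of_tendsto htends (Eventually.of_forall hbound)
  exact le_antisymm this bot_le

end KestenProof
namespace KestenProof

variable {Ω : Type*} [MeasureSpace Ω] [IsProbabilityMeasure (ℙ : Measure Ω)]
variable {M : ℕ → Ω → ℝ}

lemma ereal_eq_top {x : EReal} (h : ∀ r : ℝ, (r : EReal) ≤ x) : x = ⊤ := by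
  induction x using EReal.rec with
  | bot =>
    exfalso
    have h0 := h 0
    rw [le_bot_iff] at h0
    exact EReal.coe_ne_bot 0 h0
  | coe y =>
    exfalso
    have h0 := h (y + 1)
    rw [EReal.coe_le_coe_iff] at h0
    linarith
  | top => rfl

lemma SS_mono_n (hpos : ∀ k ω, 0 < M k ω) {n n' : ℕ} (h : n ≤ n') (ω : Ω) :
    SS M n ω ≤ SS M n' ω := by
  refine Finset.sum_le_sum_of_subset_of_nonneg ?_ (fun l _ _ => (hpos l ω).le)
  exact Finset.range_subset_range.mpr h

lemma Am_meas (hmeas : ∀ k, Measurable (M k)) (m c n : ℕ) : MeasurableSet (Am M m c n) :=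
  measurableSet_lt (measurable_const.mul (Finset.measurable_sum _ (fun l _ => hmeas l))) (hmeas n)

lemma Tt_meas (hmeas : ∀ k, Measurable (M k)) : MeasurableSet (Tt M) :=
  MeasurableSet.iUnion (fun m => MeasurableSet.iInter (fun c => MeasurableSet.iInter (fun N =>
    MeasurableSet.iUnion (fun n => Am_meas hmeas m (c+1) _))))

lemma Em_limsup (hpos : ∀ k ω, 0 < M k ω) {m : ℕ} {ω : Ω} (hω : ω ∈ Em M m)
    (hub : ∀ R : ℕ, ∃ n : ℕ, (R:ℝ) < SS M n ω) :
    Filter.limsup (fun k => ((M k ω / ∑ i ∈ Finset.range k, M i ω : ℝ) : EReal))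
      Filter.atTop = ⊤ := by
  set B := SS M m ω with hB
  have hB0 : 0 ≤ B := SS_nonneg hpos m ω
  -- find n₁ such that SS k ω ≥ 2B for all k ≥ n₁
  obtain ⟨n₁, hn₁⟩ := hub ⌈2*B⌉₊
  have hSSbig : ∀ k, n₁ ≤ k → 2*B ≤ SS M k ω := by
    intro k hk
    calc 2*B ≤ (⌈2*B⌉₊ : ℝ) := Nat.le_ceil _
      _ ≤ SS M n₁ ω := hn₁.le
      _ ≤ SS M k ω := SS_mono_n hpos hk ω
  refine ereal_eq_top ?_
  intro r
  set c : ℕ := ⌈r⌉₊ with hc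
  have hrc : r ≤ (c:ℝ) + 1 := by
    rcases le_total r 0 with h | h
    · have : (0:ℝ) ≤ (c:ℝ) + 1 := by positivity
      linarith
    · have := Nat.le_ceil r
      rw [← hc] at this
      linarith
  rw [limsup_eq_iInf_iSup_of_nat']
  refine le_iInf (fun n₀ => ?_)
  -- get k from Em with c' = 2c+1, N = n₀ + n₁
  simp only [Em, Set.mem_iInter] at hω
  obtain ⟨j, hj⟩ := Set.mem_iUnion.mp (hω (2*c+1) (n₀ + n₁))
  set k := m + (n₀ + n₁) + j + 1 with hk
  have hjk : ω ∈ Am M m (2*c+2) k := by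
    have : 2*c+1+1 = 2*c+2 := by omega
    rwa [this] at hj
  simp only [Am, Set.mem_setOf_eq] at hjk
  have hmk : m ≤ k := by omega
  have hsplit : SS M m ω + ∑ l ∈ Finset.Ico m k, M l ω = SS M k ω := by
    rw [SS, SS, Finset.range_eq_Ico, Finset.range_eq_Ico]
    exact Finset.sum_Ico_consecutive _ (Nat.zero_le m) hmk
  have hk1 : 1 ≤ k := by omega
  have hkn₁ : n₁ ≤ k := by omega
  have hSk : 0 < SS M k ω := SS_pos hpos hk1 ω
  have h2B : 2*B ≤ SS M k ω := hSSbig k hkn₁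
  -- (c+1) * SS k ≤ (2c+2) * (SS k - B) < M k
  have hcast : ((2*c+2 : ℕ):ℝ) = 2*(c:ℝ)+2 := by push_cast; ring
  rw [hcast] at hjk
  have hIco : ∑ l ∈ Finset.Ico m k, M l ω = SS M k ω - B := by
    rw [← hsplit, ← hB]; ring
  rw [hIco] at hjk
  have hkey : ((c:ℝ)+1) * SS M k ω < M k ω := by nlinarith
  have hdiv : (c:ℝ)+1 ≤ M k ω / SS M k ω := by
    rw [le_div_iff₀ hSk]
    exact hkey.le
  -- conclude
  refine le_iSup_of_le (k - n₀) ?_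
  have hkn : k - n₀ + n₀ = k := by omega
  rw [hkn]
  have : (r : EReal) ≤ (((M k ω / SS M k ω : ℝ)) : EReal) := by
    rw [EReal.coe_le_coe_iff]
    linarith
  exact this

end KestenProof

open KestenProof in
/-- Kesten's theorem: for i.i.d. positive random variables with infinite mean,
    almost surely limsup M_k / T_{k-1} = ∞, where T_k = M_1 + ⋯ + M_k. -/
theorem kesten_limsup {Ω : Type*} [MeasureSpace Ω]
    [IsProbabilityMeasure (ℙ : Measure Ω)]
    (M : ℕ → Ω → ℝ) (hmeas : ∀ k, Measurable (M k))
    (hiid : ProbabilityTheory.iIndepFun M ℙ)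
    (hident : ∀ k, ProbabilityTheory.IdentDistrib (M k) (M 0) ℙ ℙ)
    (hpos : ∀ k ω, 0 < M k ω)
    (hmean : ∫⁻ ω, ENNReal.ofReal (M 0 ω) ∂ℙ = ⊤) :
    ∀ᵐ ω ∂ℙ, Filter.limsup
        (fun k => ((M k ω / ∑ i ∈ Finset.range k, M i ω : ℝ) : EReal))
        Filter.atTop = ⊤ := by
  classical
  have hTt_half : ENNReal.ofReal (1/2) ≤ ℙ (Tt M) :=
    le_trans (Em0_ge_half hiid hmeas hpos hident hmean)
      (measure_mono (Set.subset_iUnion (Em M) 0))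
  have hTt1 : ℙ (Tt M) = 1 := by
    rcases Tt_zero_or_one hiid hmeas hpos with h | h
    · exfalso
      rw [h] at hTt_half
      have : (0:ℝ) < 1/2 := by norm_num
      exact (ENNReal.ofReal_pos.mpr this).ne' (le_antisymm hTt_half bot_le)
    · exact h
  have hae1 : ∀ᵐ ω ∂ℙ, ω ∈ Tt M := by
    have hc : ℙ ((Tt M)ᶜ) = 0 := by
      rw [measure_compl (Tt_meas hmeas) (measure_ne_top _ _), hTt1, measure_univ, tsub_self]
    exact MeasureTheory.mem_ae_iff.mpr hc
  have hae2 : ∀ᵐ ω ∂ℙ, ∀ R : ℕ, ∃ n : ℕ, (R:ℝ) < SS M n ω := by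
    rw [MeasureTheory.ae_iff]
    have hsub : {ω | ¬ ∀ R : ℕ, ∃ n : ℕ, (R:ℝ) < SS M n ω}
        ⊆ ⋃ R : ℕ, ⋂ n : ℕ, {ω | SS M n ω ≤ (R:ℝ)} := by
      intro ω hω
      simp only [Set.mem_setOf_eq] at hω
      push_neg at hω
      obtain ⟨R, hR⟩ := hω
      refine Set.mem_iUnion.mpr ⟨R, Set.mem_iInter.mpr (fun n => ?_)⟩
      exact le_of_not_gt (by simpa using hR n)
    refine le_antisymm (le_trans (measure_mono hsub) ?_) bot_le
    rw [measure_iUnion_null_iff.mpr (fun R => S_bounded_null hiid hmeas hpos hident hmean R)]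
  filter_upwards [hae1, hae2] with ω h1 h2
  obtain ⟨m, hm⟩ := Set.mem_iUnion.mp h1
  exact Em_limsup hpos hm h2
end
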